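/- arXiv:1907.08425 — 6 statements merged into one kernel-verified Lean document; each statement's English description precedes it below -/
import Mathlib

section
/- Let μ ∈ 𝒫⁻ and let k ≥ l ≥ 2 be integers. Then 𝒞_k(μ) ≥ (k(k−1))/(l(l−1)) · 𝒞_l(μ). In particular, for every k ≥ 2, 𝒞_{k+1}(μ) ≥ ((k+1)/(k−1)) · 𝒞_k(μ). -/
open MeasureTheory Filter Topology OnePoint
open scoped ENNReal NNReal

noncomputable section

/-- Euclidean space ℝ^d. -/
abbrev Ed (d : ℕ) := EuclideanSpace ℝ (Fin d)

/-- The Coulomb cost on (ℝ^d)^k: `c_k(x) = Σ_{i<j} 1/|x_i - x_j|`,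
valued in (0,+∞] with the convention 1/0 = +∞. -/
def coulomb (d k : ℕ) (x : Fin k → Ed d) : ℝ≥0∞ :=
  ∑ i : Fin k, ∑ j : Fin k, if i < j then (edist (x i) (x j))⁻¹ else 0

/-- The partial interaction cost `𝒞_k(μ)` of a subprobability μ: the infimum of
`∫ c_k dP` over nonnegative measures `P` on (ℝ^d)^k whose k marginals all equal μ
(any such P automatically has total mass ‖μ‖). -/
def partC (d k : ℕ) (μ : Measure (Ed d)) : ℝ≥0∞ :=
  ⨅ (P : Measure (Fin k → Ed d)) (_ : ∀ i : Fin k, P.map (fun x => x i) = μ),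
    ∫⁻ x, coulomb d k x ∂P

/-!
Restricting an admissible `k`-plan `P` to the coordinates `π 0, …, π (l - 1)` gives an admissible
`l`-plan, so `𝒞_l(μ) ≤ ∫ c_l(x_{π 0}, …, x_{π (l-1)}) dP` for every permutation `π`. Averaged
over all `π`, each of the `l(l-1)` ordered pairs in `c_l` is sent uniformly onto the `k(k-1)`
ordered pairs of distinct indices, so the average of `c_l ∘ π` is `l(l-1)/(k(k-1)) · c_k`.
-/

open Finset

section OffDiag

variable {α ι M : Type*} [Fintype α] [Fintype ι] [AddCommMonoid M]

theorem Equiv.Perm.sum_offDiag_comp (π : Equiv.Perm α) (g : α → α → M) :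
    ∑ p ∈ (univ : Finset α).offDiag, g (π p.1) (π p.2)
      = ∑ p ∈ (univ : Finset α).offDiag, g p.1 p.2 :=
  sum_nbij' (fun p => (π p.1, π p.2)) (fun p => (π.symm p.1, π.symm p.2))
    (by simp) (by simp) (by simp) (by simp) (by simp)

theorem Equiv.Perm.sum_apply_apply_eq_of_ne [DecidableEq α] {a b c d : α} (hab : a ≠ b)
    (hcd : c ≠ d) (g : α → α → M) :
    ∑ π : Equiv.Perm α, g (π a) (π b) = ∑ π : Equiv.Perm α, g (π c) (π d) := by
  obtain ⟨σ, hσc, hσd⟩ :=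
    MulAction.is_two_pretransitive_iff.mp (Equiv.Perm.isMultiplyPretransitive α 2) hcd hab
  exact Fintype.sum_equiv (Equiv.mulRight σ) _ _ fun π => by
    simp [← hσc, ← hσd, Equiv.Perm.smul_def]

theorem sum_perm_sum_offDiag_comp [DecidableEq α] {a b : α} (hab : a ≠ b) (e : ι ↪ α)
    (g : α → α → M) :
    ∑ π : Equiv.Perm α, ∑ p ∈ (univ : Finset ι).offDiag, g (π (e p.1)) (π (e p.2))
      = #(univ : Finset ι).offDiag • ∑ π : Equiv.Perm α, g (π a) (π b) := by
  rw [sum_comm, ← sum_const]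
  refine sum_congr rfl fun p hp => Equiv.Perm.sum_apply_apply_eq_of_ne ?_ hab g
  exact e.injective.ne (mem_offDiag.mp hp).2.2

theorem card_offDiag_smul_sum_perm_sum_offDiag_comp [DecidableEq α] (e : ι ↪ α)
    (g : α → α → M) :
    #(univ : Finset α).offDiag •
        ∑ π : Equiv.Perm α, ∑ p ∈ (univ : Finset ι).offDiag, g (π (e p.1)) (π (e p.2))
      = #(univ : Finset ι).offDiag • Fintype.card (Equiv.Perm α) •
        ∑ p ∈ (univ : Finset α).offDiag, g p.1 p.2 := by
  obtain hι | ⟨⟨i, j⟩, hij⟩ := (univ : Finset ι).offDiag.eq_empty_or_nonempty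
  · simp [hι]
  have hne : e i ≠ e j := e.injective.ne (mem_offDiag.mp hij).2.2
  have hα : Fintype.card (Equiv.Perm α) • ∑ p ∈ (univ : Finset α).offDiag, g p.1 p.2
      = #(univ : Finset α).offDiag • ∑ π : Equiv.Perm α, g (π (e i)) (π (e j)) := by
    simp_rw [← sum_perm_sum_offDiag_comp hne (Function.Embedding.refl α) g,
      Function.Embedding.refl_apply, Equiv.Perm.sum_offDiag_comp, ← card_univ, sum_const]
  rw [hα, sum_perm_sum_offDiag_comp hne, smul_comm]

theorem sum_offDiag_eq_two_smul_sum_lt [LinearOrder α] (g : α → α → M) (hg : ∀ i j, g i j = g j i) :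
    ∑ p ∈ (univ : Finset α).offDiag, g p.1 p.2 = 2 • ∑ i, ∑ j, if i < j then g i j else 0 := by
  have hsplit : ∀ i j : α, (if i ≠ j then g i j else 0)
      = (if i < j then g i j else 0) + (if j < i then g j i else 0) := by
    intro i j
    rcases lt_trichotomy i j with h | rfl | h
    · simp [h, h.ne, h.not_gt]
    · simp
    · simp [h, h.ne', h.not_gt, hg i j]
  have hoff : (univ : Finset α).offDiag = univ.filter fun p : α × α => p.1 ≠ p.2 := by
    ext; simp
  rw [hoff, sum_filter, Fintype.sum_prod_type]
  simp_rw [hsplit, sum_add_distrib]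
  rw [sum_comm (f := fun i j => if j < i then g j i else 0), two_smul]

end OffDiag

theorem two_mul_coulomb (d n : ℕ) (x : Fin n → Ed d) :
    2 * coulomb d n x = ∑ p ∈ (univ : Finset (Fin n)).offDiag, (edist (x p.1) (x p.2))⁻¹ := by
  rw [sum_offDiag_eq_two_smul_sum_lt (fun a b => (edist (x a) (x b))⁻¹) fun i j => by
    rw [edist_comm], two_smul, two_mul]
  rfl

theorem card_offDiag_univ_fin (n : ℕ) : #(univ : Finset (Fin n)).offDiag = n * (n - 1) := by
  rw [offDiag_card, card_univ, Fintype.card_fin, Nat.mul_sub_one]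

theorem mul_sum_perm_coulomb_comp {d k l : ℕ} (e : Fin l ↪ Fin k) (x : Fin k → Ed d) :
    ((k * (k - 1) : ℕ) : ℝ≥0∞) * ∑ π : Equiv.Perm (Fin k), coulomb d l (fun i => x (π (e i)))
      = ((l * (l - 1) : ℕ) : ℝ≥0∞) * k.factorial * coulomb d k x := by
  have hsum := card_offDiag_smul_sum_perm_sum_offDiag_comp e fun a b => (edist (x a) (x b))⁻¹
  have hcomp : ∀ π : Equiv.Perm (Fin k), 2 * coulomb d l (fun i => x (π (e i)))
      = ∑ p ∈ (univ : Finset (Fin l)).offDiag, (edist (x (π (e p.1))) (x (π (e p.2))))⁻¹ :=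
    fun π => two_mul_coulomb d l _
  simp only [← hcomp, ← two_mul_coulomb, ← mul_sum, nsmul_eq_mul, card_offDiag_univ_fin,
    Fintype.card_perm, Fintype.card_fin] at hsum
  refine (ENNReal.mul_right_inj (a := 2) two_ne_zero ENNReal.ofNat_ne_top).mp ?_
  rw [mul_left_comm, hsum]
  ring

theorem measurable_coulomb (d n : ℕ) : Measurable (coulomb d n) := by
  unfold coulomb
  refine Finset.measurable_sum _ fun i _ => Finset.measurable_sum _ fun j _ => ?_
  split_ifs <;> fun_prop

theorem partC_le_lintegral_coulomb_comp {d k l : ℕ} {μ : Measure (Ed d)}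
    {P : Measure (Fin k → Ed d)} (hP : ∀ i, P.map (fun x => x i) = μ) (e : Fin l → Fin k) :
    partC d l μ ≤ ∫⁻ x, coulomb d l (fun i => x (e i)) ∂P := by
  have he : Measurable fun (x : Fin k → Ed d) (i : Fin l) => x (e i) := by fun_prop
  have hmarg : ∀ i, (P.map fun x i => x (e i)).map (fun y => y i) = μ := fun i => by
    rw [Measure.map_map (measurable_pi_apply i) he]
    exact hP (e i)
  rw [← lintegral_map (measurable_coulomb d l) he]
  exact iInf₂_le _ hmarg

theorem mul_partC_le_mul_lintegral_coulomb {d k l : ℕ} (hlk : l ≤ k) {μ : Measure (Ed d)}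
    {P : Measure (Fin k → Ed d)} (hP : ∀ i, P.map (fun x => x i) = μ) :
    ((k * (k - 1) : ℕ) : ℝ≥0∞) * partC d l μ
      ≤ ((l * (l - 1) : ℕ) : ℝ≥0∞) * ∫⁻ x, coulomb d k x ∂P := by
  set e := Fin.castLEEmb hlk
  have hcomp : ∀ π : Equiv.Perm (Fin k),
      Measurable fun x : Fin k → Ed d => coulomb d l fun i => x (π (e i)) :=
    fun π => (measurable_coulomb d l).comp (by fun_prop)
  refine (ENNReal.mul_le_mul_iff_right (a := k.factorial) (by positivity)
    (ENNReal.natCast_ne_top _)).mp ?_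
  calc (k.factorial : ℝ≥0∞) * (((k * (k - 1) : ℕ) : ℝ≥0∞) * partC d l μ)
      = ((k * (k - 1) : ℕ) : ℝ≥0∞) * ∑ _π : Equiv.Perm (Fin k), partC d l μ := by
        rw [sum_const, card_univ, Fintype.card_perm, Fintype.card_fin, nsmul_eq_mul]
        ring
    _ ≤ ((k * (k - 1) : ℕ) : ℝ≥0∞) *
          ∑ π : Equiv.Perm (Fin k), ∫⁻ x, coulomb d l (fun i => x (π (e i))) ∂P := by
        gcongr with π
        exact partC_le_lintegral_coulomb_comp hP _
    _ = ∫⁻ x, ((k * (k - 1) : ℕ) : ℝ≥0∞) *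
          ∑ π : Equiv.Perm (Fin k), coulomb d l (fun i => x (π (e i))) ∂P := by
        rw [lintegral_const_mul _ (Finset.measurable_sum _ fun π _ => hcomp π),
          lintegral_finsetSum _ fun π _ => hcomp π]
    _ = (k.factorial : ℝ≥0∞) * (((l * (l - 1) : ℕ) : ℝ≥0∞) * ∫⁻ x, coulomb d k x ∂P) := by
        simp_rw [mul_sum_perm_coulomb_comp]
        rw [lintegral_const_mul _ (measurable_coulomb d k)]
        ring

theorem div_mul_partC_le {d k l : ℕ} (hlk : l ≤ k) (μ : Measure (Ed d)) :
    ((k * (k - 1) : ℕ) : ℝ≥0∞) / ((l * (l - 1) : ℕ) : ℝ≥0∞) * partC d l μ ≤ partC d k μ := by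
  refine le_iInf₂ fun P hP => ?_
  rw [← ENNReal.mul_div_right_comm]
  exact ENNReal.div_le_of_le_mul' (mul_partC_le_mul_lintegral_coulomb hlk hP)

theorem partC_monotone_general (d : ℕ) (μ : Measure (Ed d))
    (k l : ℕ) (hkl : l ≤ k) :
    (((k * (k - 1) : ℕ) : ℝ≥0∞) / ((l * (l - 1) : ℕ) : ℝ≥0∞)) * partC d l μ ≤ partC d k μ ∧
    ∀ m : ℕ, 2 ≤ m →
      (((m + 1 : ℕ) : ℝ≥0∞) / ((m - 1 : ℕ) : ℝ≥0∞)) * partC d m μ ≤ partC d (m + 1) μ := by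
  refine ⟨div_mul_partC_le hkl μ, fun m hm => ?_⟩
  have hcoeff : (((m + 1) * (m + 1 - 1) : ℕ) : ℝ≥0∞) / ((m * (m - 1) : ℕ) : ℝ≥0∞)
      = ((m + 1 : ℕ) : ℝ≥0∞) / ((m - 1 : ℕ) : ℝ≥0∞) := by
    rw [Nat.add_sub_cancel, Nat.cast_mul, Nat.cast_mul, mul_comm _ (m : ℝ≥0∞)]
    exact ENNReal.mul_div_mul_left _ _ (by exact_mod_cast (by omega : m ≠ 0))
      (ENNReal.natCast_ne_top m)
  exact hcoeff ▸ div_mul_partC_le m.le_succ μ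

/-- **monotonicity of the partial costs.** For μ ∈ 𝒫⁻ and k ≥ l ≥ 2,
`𝒞_k(μ) ≥ (k(k-1))/(l(l-1)) 𝒞_l(μ)`; in particular `𝒞_{m+1}(μ) ≥ ((m+1)/(m-1)) 𝒞_m(μ)`
for every m ≥ 2. -/
theorem partC_monotone (d : ℕ) (hd : 1 ≤ d) (μ : Measure (Ed d)) (hμ : μ Set.univ ≤ 1)
    (k l : ℕ) (hl : 2 ≤ l) (hkl : l ≤ k) :
    (((k * (k - 1) : ℕ) : ℝ≥0∞) / ((l * (l - 1) : ℕ) : ℝ≥0∞)) * partC d l μ ≤ partC d k μ ∧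
    ∀ m : ℕ, 2 ≤ m →
      (((m + 1 : ℕ) : ℝ≥0∞) / ((m - 1 : ℕ) : ℝ≥0∞)) * partC d m μ ≤ partC d (m + 1) μ :=
  partC_monotone_general d μ k l hkl

end
end

section
/- Let ψ ∈ 𝒜 (respectively ψ ∈ ℬ) and let λ ≤ ψ^∞ := limsup_{|x|→+∞} ψ(x). Then the truncated function ψ_λ := max{ψ, λ} also belongs to 𝒜 (respectively to ℬ). -/
open MeasureTheory Filter Topology OnePoint
open scoped ENNReal NNReal

noncomputable section

/-- The pointwise dual constraint `(1/N) Σ_i ψ(x_i) ≤ c(x)` for all x. -/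
def DualConstraint (d N : ℕ) (ψ : Ed d → ℝ) : Prop :=
  ∀ x : Fin N → Ed d, ENNReal.ofReal ((∑ i, ψ (x i)) / (N : ℝ)) ≤ coulomb d N x

/-- The class 𝒜: continuous functions with a constant limit at infinity (C₀ ⊕ ℝ)
satisfying the dual constraint. -/
def memA (d N : ℕ) (ψ : Ed d → ℝ) : Prop :=
  Continuous ψ ∧ (∃ κ : ℝ, Tendsto ψ (cocompact (Ed d)) (𝓝 κ)) ∧ DualConstraint d N ψ

/-- The class ℬ: lower semicontinuous functions, bounded below, satisfying the dual
constraint. -/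
def memB (d N : ℕ) (ψ : Ed d → ℝ) : Prop :=
  LowerSemicontinuous ψ ∧ BddBelow (Set.range ψ) ∧ DualConstraint d N ψ

/-- Key induction: removing bad points one at a time. -/
lemma trunc_ind (d N : ℕ) (hN : 2 ≤ N) (ψ : Ed d → ℝ) (lam : ℝ)
    (hψ : DualConstraint d N ψ)
    (hfreq : ∀ ε : ℝ, 0 < ε → ∃ᶠ z in cocompact (Ed d), lam - ε < ψ z)
    (ε : ℝ) (hε : 0 < ε) :
    ∀ k : ℕ, ∀ x : Fin N → Ed d,
      (Finset.univ.filter (fun i => ψ (x i) ≤ lam - ε)).card ≤ k →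
      ENNReal.ofReal ((∑ i, max (ψ (x i)) lam) / (N : ℝ)) ≤
        coulomb d N x + ENNReal.ofReal (((k : ℝ) + 1) * ε) := by
  have hN0 : (0:ℝ) < N := by
    have : (2:ℝ) ≤ N := by exact_mod_cast hN
    linarith
  intro k
  induction k with
  | zero =>
    intro x hcard
    have hall : ∀ i, lam - ε < ψ (x i) := by
      intro i
      by_contra h
      push_neg at h
      have hmem : i ∈ Finset.univ.filter (fun i => ψ (x i) ≤ lam - ε) := by
        simp [h]
      have := Finset.card_pos.mpr ⟨i, hmem⟩
      omega
    have hsum : (∑ i, max (ψ (x i)) lam) ≤ (∑ i, ψ (x i)) + (N : ℝ) * ε := by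
      calc (∑ i, max (ψ (x i)) lam) ≤ ∑ i : Fin N, (ψ (x i) + ε) := by
            refine Finset.sum_le_sum fun i _ => ?_
            exact max_le (by linarith) (by linarith [hall i])
        _ = (∑ i, ψ (x i)) + (N : ℝ) * ε := by
            rw [Finset.sum_add_distrib, Finset.sum_const, Finset.card_univ]
            simp [nsmul_eq_mul]
    calc ENNReal.ofReal ((∑ i, max (ψ (x i)) lam) / (N : ℝ))
        ≤ ENNReal.ofReal ((∑ i, ψ (x i)) / (N : ℝ) + ε) := by
          apply ENNReal.ofReal_le_ofReal
          have h1 : (∑ i, max (ψ (x i)) lam) / (N : ℝ)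
              ≤ ((∑ i, ψ (x i)) + (N : ℝ) * ε) / (N : ℝ) := by
            gcongr
          rw [add_div, mul_div_cancel_left₀ _ (ne_of_gt hN0)] at h1
          exact h1
      _ ≤ ENNReal.ofReal ((∑ i, ψ (x i)) / (N : ℝ)) + ENNReal.ofReal ε :=
          ENNReal.ofReal_add_le
      _ ≤ coulomb d N x + ENNReal.ofReal ε := add_le_add_left (hψ x) _
      _ = coulomb d N x + ENNReal.ofReal (((0:ℕ) + 1 : ℝ) * ε) := by norm_num
  | succ k ih =>
    intro x hcard
    by_cases hk : (Finset.univ.filter (fun i => ψ (x i) ≤ lam - ε)).card ≤ k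
    · refine (ih x hk).trans (add_le_add_right (ENNReal.ofReal_le_ofReal ?_) _)
      have : ((k:ℝ)+1) ≤ ((k:ℝ)+1+1) := by linarith
      push_cast
      nlinarith
    · have hpos : 0 < (Finset.univ.filter (fun i => ψ (x i) ≤ lam - ε)).card := by omega
      obtain ⟨i₀, hi₀⟩ := Finset.card_pos.mp hpos
      have hbad : ψ (x i₀) ≤ lam - ε := (Finset.mem_filter.mp hi₀).2
      set R := (∑ i, ‖x i‖) + 2 * (N:ℝ) / ε with hRdef
      have hU : (Metric.closedBall (0 : Ed d) R)ᶜ ∈ cocompact (Ed d) :=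
        (isCompact_closedBall _ _).compl_mem_cocompact
      obtain ⟨y, hyU, hyψ⟩ := Filter.frequently_iff.mp (hfreq ε hε) hU
      have hynorm : (∑ i, ‖x i‖) + 2 * (N:ℝ) / ε < ‖y‖ := by
        rw [← hRdef]
        have h1 : ¬ dist y (0 : Ed d) ≤ R := by
          simpa [Metric.mem_closedBall] using hyU
        rw [dist_zero_right] at h1
        linarith [not_le.mp h1]
      have hdist : ∀ j : Fin N, 2 * (N:ℝ) / ε ≤ dist y (x j) := by
        intro j
        have h1 : ‖x j‖ ≤ ∑ i, ‖x i‖ :=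
          Finset.single_le_sum (fun i _ => norm_nonneg (x i)) (Finset.mem_univ j)
        have h2 : ‖y‖ - ‖x j‖ ≤ dist y (x j) := by
          rw [dist_eq_norm]
          linarith [norm_sub_norm_le y (x j)]
        linarith
      have hterm : ∀ j : Fin N, (edist y (x j))⁻¹ ≤ ENNReal.ofReal (ε / (2 * (N:ℝ))) := by
        intro j
        have h2N : (0:ℝ) < 2 * (N:ℝ) / ε := by positivity
        rw [edist_dist, show ε / (2*(N:ℝ)) = (2*(N:ℝ)/ε)⁻¹ by rw [inv_div],
          ENNReal.ofReal_inv_of_pos h2N]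
        exact ENNReal.inv_le_inv' (ENNReal.ofReal_le_ofReal (hdist j))
      set x' := Function.update x i₀ y with hx'def
      have hx'i₀ : x' i₀ = y := Function.update_self _ _ _
      have hx'ne : ∀ j, j ≠ i₀ → x' j = x j := fun j hj => Function.update_of_ne hj _ _
      have hcard' : (Finset.univ.filter (fun i => ψ (x' i) ≤ lam - ε)).card ≤ k := by
        have hsub : Finset.univ.filter (fun i => ψ (x' i) ≤ lam - ε) ⊆
            (Finset.univ.filter (fun i => ψ (x i) ≤ lam - ε)).erase i₀ := by
          intro j hj
          have hj' := (Finset.mem_filter.mp hj).2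
          have hji₀ : j ≠ i₀ := by
            intro h; rw [h, hx'i₀] at hj'; linarith
          refine Finset.mem_erase.mpr ⟨hji₀, Finset.mem_filter.mpr ⟨Finset.mem_univ _, ?_⟩⟩
          rwa [hx'ne j hji₀] at hj'
        have h1 := Finset.card_le_card hsub
        rw [Finset.card_erase_of_mem hi₀] at h1
        omega
      have hsums : (∑ i, max (ψ (x i)) lam) ≤ ∑ i, max (ψ (x' i)) lam := by
        refine Finset.sum_le_sum fun i _ => ?_
        by_cases h : i = i₀
        · rw [h, hx'i₀, max_eq_right (by linarith : ψ (x i₀) ≤ lam)]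
          exact le_max_right _ _
        · rw [hx'ne i h]
      set c := ENNReal.ofReal (ε / (2 * (N:ℝ))) with hcdef
      have hcoul : coulomb d N x' ≤ coulomb d N x + ENNReal.ofReal ε := by
        have hc : ∀ i j : Fin N,
            (if i < j then (edist (x' i) (x' j))⁻¹ else 0) ≤
              (if i < j then (edist (x i) (x j))⁻¹ else 0)
              + ((if i = i₀ then c else 0) + (if j = i₀ then c else 0)) := by
          intro i j
          by_cases hij : i < j
          · simp only [if_pos hij]
            by_cases hi : i = i₀
            · have hji : j ≠ i₀ := by
                intro h; rw [hi] at hij; rw [h] at hij; exact lt_irrefl _ hij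
              rw [hi, hx'i₀, hx'ne j hji, if_pos rfl, if_neg hji]
              calc (edist y (x j))⁻¹ ≤ c := hterm j
                _ ≤ _ := le_add_left (le_add_right le_rfl)
            · by_cases hj : j = i₀
              · rw [hx'ne i hi, hj, hx'i₀, if_neg hi, if_pos rfl]
                calc (edist (x i) y)⁻¹ = (edist y (x i))⁻¹ := by rw [edist_comm]
                  _ ≤ c := hterm i
                  _ ≤ _ := le_add_left (le_add_left le_rfl)
              · rw [hx'ne i hi, hx'ne j hj, if_neg hi, if_neg hj]
                simp
          · simp [hij]
        have hS : (∑ i : Fin N, ∑ j : Fin N,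
            ((if i = i₀ then c else 0) + (if j = i₀ then c else 0)))
            = (N : ℝ≥0∞) * c + (N : ℝ≥0∞) * c := by
          have h1 : ∀ i : Fin N, (∑ j : Fin N,
              ((if i = i₀ then c else 0) + (if j = i₀ then c else 0)))
              = (N : ℝ≥0∞) * (if i = i₀ then c else 0) + c := by
            intro i
            rw [Finset.sum_add_distrib, Finset.sum_const, Finset.card_univ, Fintype.card_fin,
              nsmul_eq_mul, Finset.sum_ite_eq' Finset.univ i₀ (fun _ => c)]
            simp
          rw [Finset.sum_congr rfl (fun i _ => h1 i), Finset.sum_add_distrib,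
            Finset.sum_const, Finset.card_univ, Fintype.card_fin, nsmul_eq_mul,
            ← Finset.mul_sum, Finset.sum_ite_eq' Finset.univ i₀ (fun _ => c)]
          simp
        have hNc : (N : ℝ≥0∞) * c = ENNReal.ofReal (ε / 2) := by
          rw [hcdef, ← ENNReal.ofReal_natCast, ← ENNReal.ofReal_mul (Nat.cast_nonneg N)]
          congr 1
          field_simp
        have hcc : (N : ℝ≥0∞) * c + (N : ℝ≥0∞) * c = ENNReal.ofReal ε := by
          rw [hNc, ← ENNReal.ofReal_add (by positivity) (by positivity)]
          norm_num
        calc coulomb d N x'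
            ≤ ∑ i : Fin N, ∑ j : Fin N, ((if i < j then (edist (x i) (x j))⁻¹ else 0)
              + ((if i = i₀ then c else 0) + (if j = i₀ then c else 0))) :=
              Finset.sum_le_sum fun i _ => Finset.sum_le_sum fun j _ => hc i j
          _ = coulomb d N x + ∑ i : Fin N, ∑ j : Fin N,
              ((if i = i₀ then c else 0) + (if j = i₀ then c else 0)) := by
              rw [Finset.sum_congr rfl (fun i (_ : i ∈ Finset.univ) =>
                (Finset.sum_add_distrib : _ = _)), Finset.sum_add_distrib, coulomb]
          _ = coulomb d N x + ENNReal.ofReal ε := by rw [hS, hcc]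
      calc ENNReal.ofReal ((∑ i, max (ψ (x i)) lam) / (N : ℝ))
          ≤ ENNReal.ofReal ((∑ i, max (ψ (x' i)) lam) / (N : ℝ)) := by
            apply ENNReal.ofReal_le_ofReal
            gcongr
        _ ≤ coulomb d N x' + ENNReal.ofReal (((k:ℝ) + 1) * ε) := ih x' hcard'
        _ ≤ (coulomb d N x + ENNReal.ofReal ε) + ENNReal.ofReal (((k:ℝ) + 1) * ε) :=
            add_le_add_left hcoul _
        _ = coulomb d N x + ENNReal.ofReal ((((k:ℕ)+1 : ℕ) : ℝ) * ε + ε) := by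
            rw [add_assoc, ← ENNReal.ofReal_add hε.le (by positivity)]
            congr 1
            push_cast
            ring
        _ = coulomb d N x + ENNReal.ofReal (((((k:ℕ)+1 : ℕ) : ℝ) + 1) * ε) := by
            congr 1
            ring_nf

lemma trunc_dual (d N : ℕ) (hN : 2 ≤ N) (ψ : Ed d → ℝ) (lam : ℝ)
    (hψ : DualConstraint d N ψ)
    (hfreq : ∀ ε : ℝ, 0 < ε → ∃ᶠ z in cocompact (Ed d), lam - ε < ψ z) :
    DualConstraint d N (fun x => max (ψ x) lam) := by
  intro x
  show ENNReal.ofReal ((∑ i, max (ψ (x i)) lam) / (N : ℝ)) ≤ coulomb d N x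
  apply ENNReal.le_of_forall_pos_le_add
  intro ε hε _
  have hN1 : (0:ℝ) < (N:ℝ) + 1 := by positivity
  have hε' : 0 < (ε:ℝ) / ((N:ℝ) + 1) := by
    apply div_pos _ hN1
    exact_mod_cast hε
  have h := trunc_ind d N hN ψ lam hψ hfreq _ hε' N x (by
    calc (Finset.univ.filter (fun i => ψ (x i) ≤ lam - (ε:ℝ)/((N:ℝ)+1))).card
        ≤ Finset.univ.card := Finset.card_filter_le _ _
      _ = N := by simp)
  have heq : ENNReal.ofReal (((N:ℝ) + 1) * ((ε:ℝ) / ((N:ℝ) + 1))) = (ε : ℝ≥0∞) := by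
    rw [mul_div_cancel₀ _ (ne_of_gt hN1)]
    exact ENNReal.ofReal_coe_nnreal
  rw [heq] at h
  exact h

/-- **truncation lemma.** If ψ ∈ 𝒜 (resp. ψ ∈ ℬ) and λ ≤ ψ^∞, where
`ψ^∞ = limsup_{|x|→∞} ψ(x)`, then `max(ψ, λ)` belongs to 𝒜 (resp. to ℬ). -/
theorem truncation_mem (d N : ℕ) (hd : 1 ≤ d) (hN : 2 ≤ N) (ψ : Ed d → ℝ) (lam : ℝ)
    (hlam : lam ≤ Filter.limsup ψ (cocompact (Ed d))) :
    (memA d N ψ → memA d N (fun x => max (ψ x) lam)) ∧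
    (memB d N ψ → memB d N (fun x => max (ψ x) lam)) := by
  haveI : Nontrivial (Ed d) := by
    refine nontrivial_of_ne (EuclideanSpace.single (⟨0, hd⟩ : Fin d) (1:ℝ)) 0 ?_
    intro h
    have h1 : ‖EuclideanSpace.single (⟨0, hd⟩ : Fin d) (1:ℝ)‖ = 1 := by
      rw [EuclideanSpace.norm_single]; norm_num
    rw [h, norm_zero] at h1
    norm_num at h1
  constructor
  · rintro ⟨hcont, ⟨κ, hκ⟩, hdual⟩
    have hlim : Filter.limsup ψ (cocompact (Ed d)) = κ := hκ.limsup_eq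
    have hlk : lam ≤ κ := hlim ▸ hlam
    have hfreq : ∀ ε : ℝ, 0 < ε → ∃ᶠ z in cocompact (Ed d), lam - ε < ψ z := by
      intro ε hε
      exact (hκ.eventually (eventually_gt_nhds (by linarith : lam - ε < κ))).frequently
    exact ⟨hcont.max continuous_const, ⟨max κ lam, hκ.max tendsto_const_nhds⟩,
      trunc_dual d N hN ψ lam hdual hfreq⟩
  · rintro ⟨hlsc, hbdd, hdual⟩
    obtain ⟨b, hb⟩ := hbdd
    have hcb : IsCoboundedUnder (· ≤ ·) (cocompact (Ed d)) ψ :=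
      Filter.isCoboundedUnder_le_of_le _ (fun z => hb ⟨z, rfl⟩)
    have hfreq : ∀ ε : ℝ, 0 < ε → ∃ᶠ z in cocompact (Ed d), lam - ε < ψ z := by
      intro ε hε
      exact Filter.frequently_lt_of_lt_limsup hcb (by linarith)
    refine ⟨?_, ⟨lam, ?_⟩, trunc_dual d N hN ψ lam hdual hfreq⟩
    · intro x y hy
      rcases lt_or_ge y lam with h | h
      · exact Filter.Eventually.of_forall fun z => lt_of_lt_of_le h (le_max_right _ _)
      · have hx : y < ψ x := by
          rcases lt_max_iff.mp hy with h' | h'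
          · exact h'
          · linarith
        exact (hlsc x y hx).mono fun z hz => lt_of_lt_of_le hz (le_max_left _ _)
    · rintro v ⟨z, rfl⟩
      exact le_max_right _ _

end
end

section
/- For every φ ∈ C₀, every integer N ≥ 2, and every integer k with 1 ≤ k ≤ N−1, one has M_k((k/N)φ) ≤ M_{k+1}(((k+1)/N)φ); consequently M_1(φ/N) ≤ M_2((2/N)φ) ≤ … ≤ M_N(φ). -/
open MeasureTheory Filter Topology OnePoint
open scoped ENNReal NNReal

set_option maxHeartbeats 1000000
noncomputable section

/-- `M_k(φ) = sup { (1/k) Σ_i φ(x_i) - c_k(x) : x ∈ (ℝ^d)^k }` for φ bounded above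
(tuples with `c_k(x) = +∞` contribute -∞ and hence are discarded). -/
def Mfun (d k : ℕ) (φ : Ed d → ℝ) : ℝ :=
  sSup { r : ℝ | ∃ x : Fin k → Ed d, coulomb d k x ≠ ⊤ ∧
    r = (∑ i, φ (x i)) / (k : ℝ) - (coulomb d k x).toReal }

/-- Membership in C₀: continuous and vanishing at infinity. -/
def IsC0 (d : ℕ) (φ : Ed d → ℝ) : Prop :=
  Continuous φ ∧ Tendsto φ (cocompact (Ed d)) (𝓝 0)

lemma isC0_bound {d : ℕ} (φ : Ed d → ℝ) (hφ : IsC0 d φ) :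
    ∃ B : ℝ, 0 ≤ B ∧ ∀ x, |φ x| ≤ B := by
  have h := hφ.2 (Metric.closedBall_mem_nhds (0:ℝ) one_pos)
  rw [mem_map, mem_cocompact] at h
  obtain ⟨K, hK, hKs⟩ := h
  obtain ⟨C, hC⟩ := hK.exists_bound_of_continuousOn hφ.1.continuousOn
  refine ⟨max C 1, le_trans zero_le_one (le_max_right _ _), fun x => ?_⟩
  by_cases hx : x ∈ K
  · exact le_trans (hC x hx) (le_max_left _ _)
  · have h2 := hKs hx
    simp only [Set.mem_preimage, Metric.mem_closedBall, Real.dist_eq, sub_zero] at h2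
    exact h2.trans (le_max_right _ _)

lemma coulomb_ne_top {d k : ℕ} {x : Fin k → Ed d} (hx : Function.Injective x) :
    coulomb d k x ≠ ⊤ := by
  rw [← lt_top_iff_ne_top]
  unfold coulomb
  rw [ENNReal.sum_lt_top]
  intro i _
  rw [ENNReal.sum_lt_top]
  intro j _
  split_ifs with h
  · rw [ENNReal.inv_lt_top]
    refine pos_iff_ne_zero.2 (fun he => (ne_of_lt h) (hx (edist_eq_zero.1 he)))
  · exact ENNReal.zero_lt_top

lemma exists_inj (d k : ℕ) (hd : 1 ≤ d) : ∃ x : Fin k → Ed d, Function.Injective x := by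
  refine ⟨fun i => ((i : ℕ) : ℝ) • EuclideanSpace.single (⟨0, hd⟩ : Fin d) (1:ℝ), ?_⟩
  intro i j hij
  have hv : EuclideanSpace.single (⟨0, hd⟩ : Fin d) (1:ℝ) ≠ 0 := by
    intro h
    have := congrArg (fun w : Ed d => w (⟨0, hd⟩ : Fin d)) h
    simp [EuclideanSpace.single_apply] at this
  have h2 : ((i : ℕ) : ℝ) = ((j : ℕ) : ℝ) := smul_left_injective ℝ hv hij
  exact Fin.ext (Nat.cast_injective h2)

lemma Mset_bddAbove (d k : ℕ) (hk : 1 ≤ k) (ψ : Ed d → ℝ) (B : ℝ) (hB : ∀ x, ψ x ≤ B) :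
    BddAbove { r : ℝ | ∃ x : Fin k → Ed d, coulomb d k x ≠ ⊤ ∧
      r = (∑ i, ψ (x i)) / (k : ℝ) - (coulomb d k x).toReal } := by
  refine ⟨B, fun r hr => ?_⟩
  obtain ⟨x, hx, rfl⟩ := hr
  have h1 : (∑ i, ψ (x i)) ≤ (k : ℝ) * B := by
    calc (∑ i, ψ (x i)) ≤ ∑ _i : Fin k, B := Finset.sum_le_sum fun i _ => hB _
    _ = (k : ℝ) * B := by simp [mul_comm]
  have hk' : (0:ℝ) < k := by exact_mod_cast hk
  have h2 : (∑ i, ψ (x i)) / (k : ℝ) ≤ B := by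
    rw [div_le_iff₀ hk']; linarith [mul_comm (k:ℝ) B]
  have h0 : 0 ≤ (coulomb d k x).toReal := ENNReal.toReal_nonneg
  linarith

lemma coulomb_snoc (d k : ℕ) (x : Fin k → Ed d) (y : Ed d) :
    coulomb d (k+1) (Fin.snoc x y) = coulomb d k x + ∑ i, (edist (x i) y)⁻¹ := by
  unfold coulomb
  rw [Fin.sum_univ_castSucc]
  have h1 : ∀ i : Fin k, (∑ j : Fin (k+1), if (Fin.castSucc i) < j then
      (edist ((Fin.snoc x y : Fin (k+1) → Ed d) (Fin.castSucc i)) ((Fin.snoc x y : Fin (k+1) → Ed d) j))⁻¹ else 0)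
      = (∑ j : Fin k, if i < j then (edist (x i) (x j))⁻¹ else 0) + (edist (x i) y)⁻¹ := by
    intro i
    rw [Fin.sum_univ_castSucc]
    simp [Fin.snoc_castSucc, Fin.snoc_last, Fin.castSucc_lt_castSucc_iff, Fin.castSucc_lt_last]
  rw [Finset.sum_congr rfl (fun i _ => h1 i)]
  have h2 : (∑ j : Fin (k+1), if Fin.last k < j then
      (edist ((Fin.snoc x y : Fin (k+1) → Ed d) (Fin.last k)) ((Fin.snoc x y : Fin (k+1) → Ed d) j))⁻¹ else 0) = 0 := by
    apply Finset.sum_eq_zero; intro j _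
    rw [if_neg (not_lt.2 (Fin.le_last j))]
  rw [h2, add_zero, Finset.sum_add_distrib]

lemma Mfun_step (d N k : ℕ) (hd : 1 ≤ d) (hN : 1 ≤ N) (hk : 1 ≤ k)
    (φ : Ed d → ℝ) (hφ : IsC0 d φ) :
    Mfun d k (fun x => ((k : ℝ) / N) * φ x)
      ≤ Mfun d (k + 1) (fun x => (((k : ℝ) + 1) / N) * φ x) := by
  obtain ⟨B, hB0, hB⟩ := isC0_bound φ hφ
  have hNpos : (0:ℝ) < N := by exact_mod_cast hN
  have hkpos : (0:ℝ) < k := by exact_mod_cast hk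
  -- bounded above
  have hbdd : BddAbove { r : ℝ | ∃ x : Fin (k+1) → Ed d, coulomb d (k+1) x ≠ ⊤ ∧
      r = (∑ i, (((k : ℝ) + 1) / N) * φ (x i)) / ((k+1 : ℕ) : ℝ) - (coulomb d (k+1) x).toReal } := by
    refine Mset_bddAbove d (k+1) (by omega) (fun x => (((k : ℝ) + 1) / N) * φ x)
      ((((k : ℝ) + 1) / N) * B) (fun x => ?_)
    have h1 : (((k : ℝ) + 1) / N) * φ x ≤ (((k : ℝ) + 1) / N) * |φ x| :=
      mul_le_mul_of_nonneg_left (le_abs_self _) (by positivity)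
    exact h1.trans (mul_le_mul_of_nonneg_left (hB x) (by positivity))
  -- nonempty on the left
  obtain ⟨x₀, hx₀⟩ := exists_inj d k hd
  have hne : Set.Nonempty { r : ℝ | ∃ x : Fin k → Ed d, coulomb d k x ≠ ⊤ ∧
      r = (∑ i, ((k : ℝ) / N) * φ (x i)) / (k : ℝ) - (coulomb d k x).toReal } :=
    ⟨_, x₀, coulomb_ne_top hx₀, rfl⟩
  unfold Mfun
  apply csSup_le hne
  rintro r ⟨x, hx, rfl⟩
  -- sequence of witnesses
  set v : Ed d := EuclideanSpace.single (⟨0, hd⟩ : Fin d) (1:ℝ) with hv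
  have hvnorm : ‖v‖ = 1 := by simp [hv, EuclideanSpace.norm_single]
  set C : ℝ := 1 + ∑ i, ‖x i‖ with hC
  have hCi : ∀ i, ‖x i‖ + 1 ≤ C := by
    intro i
    have h1 : ‖x i‖ ≤ ∑ i, ‖x i‖ :=
      Finset.single_le_sum (f := fun i => ‖x i‖) (fun i _ => norm_nonneg _) (Finset.mem_univ i)
    simp only [hC]; linarith
  have hC1 : (1:ℝ) ≤ C := by
    have := hCi ⟨0, hk⟩
    have := norm_nonneg (x ⟨0, hk⟩)
    linarith
  set y : ℕ → Ed d := fun n => ((n : ℝ) + C) • v with hy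
  have hynorm : ∀ n, ‖y n‖ = (n : ℝ) + C := by
    intro n
    have h0 : (0:ℝ) ≤ (n : ℝ) + C := by
      have := Nat.cast_nonneg (α := ℝ) n
      linarith
    simp only [hy, norm_smul, hvnorm, mul_one, Real.norm_eq_abs, abs_of_nonneg h0]
  have hdist : ∀ (n : ℕ) (i : Fin k), (n : ℝ) + 1 ≤ dist (x i) (y n) := by
    intro n i
    have h1 : ‖y n‖ - ‖x i‖ ≤ ‖y n - x i‖ := by
      have := abs_norm_sub_norm_le (y n) (x i)
      exact (abs_le.1 this).2.trans (le_refl _) |>.trans_eq rfl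
    rw [dist_comm, dist_eq_norm]
    have := hCi i
    rw [hynorm] at h1
    linarith
  have hxy : ∀ (n : ℕ) (i : Fin k), x i ≠ y n := by
    intro n i h
    have := hdist n i
    rw [h, dist_self] at this
    have : (0:ℝ) ≤ n := Nat.cast_nonneg n
    linarith [hdist n i, (dist_self (y n)).symm ▸ this]
  -- finite extra cost
  have hsne : ∀ n, (∑ i, (edist (x i) (y n))⁻¹) ≠ ⊤ := by
    intro n
    rw [← lt_top_iff_ne_top, ENNReal.sum_lt_top]
    intro i _
    rw [ENNReal.inv_lt_top]
    exact pos_iff_ne_zero.2 (fun he => (hxy n i) (edist_eq_zero.1 he))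
  have hcne : ∀ n, coulomb d (k+1) (Fin.snoc x (y n)) ≠ ⊤ := by
    intro n
    rw [coulomb_snoc]
    exact ENNReal.add_ne_top.2 ⟨hx, hsne n⟩
  set f : ℕ → ℝ := fun n =>
    (∑ i, (((k : ℝ) + 1) / N) * φ ((Fin.snoc x (y n) : Fin (k+1) → Ed d) i)) / ((k+1 : ℕ) : ℝ)
      - (coulomb d (k+1) (Fin.snoc x (y n))).toReal with hf
  have hmem : ∀ n, f n ∈ { r : ℝ | ∃ x : Fin (k+1) → Ed d, coulomb d (k+1) x ≠ ⊤ ∧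
      r = (∑ i, (((k : ℝ) + 1) / N) * φ (x i)) / ((k+1 : ℕ) : ℝ) - (coulomb d (k+1) x).toReal } :=
    fun n => ⟨Fin.snoc x (y n), hcne n, rfl⟩
  have hle : ∀ n, f n ≤ sSup { r : ℝ | ∃ x : Fin (k+1) → Ed d, coulomb d (k+1) x ≠ ⊤ ∧
      r = (∑ i, (((k : ℝ) + 1) / N) * φ (x i)) / ((k+1 : ℕ) : ℝ) - (coulomb d (k+1) x).toReal } :=
    fun n => le_csSup hbdd (hmem n)
  -- rewrite f n
  have hfeq : ∀ n, f n = ((∑ i, ((k : ℝ) / N) * φ (x i)) / (k : ℝ) - (coulomb d k x).toReal)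
      + φ (y n) / N - ∑ i, (dist (x i) (y n))⁻¹ := by
    intro n
    rw [hf]
    simp only
    rw [coulomb_snoc, ENNReal.toReal_add hx (hsne n), Fin.sum_univ_castSucc]
    simp only [Fin.snoc_castSucc, Fin.snoc_last]
    have hts : (∑ i, (edist (x i) (y n))⁻¹).toReal = ∑ i, (dist (x i) (y n))⁻¹ := by
      rw [ENNReal.toReal_sum (fun i _ => by
        rw [ENNReal.inv_ne_top]; exact fun he => (hxy n i) (edist_eq_zero.1 he))]
      congr 1
      ext i
      rw [ENNReal.toReal_inv, edist_dist, ENNReal.toReal_ofReal dist_nonneg]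
    rw [hts, ← Finset.mul_sum, ← Finset.mul_sum]
    push_cast
    have hkne : (k:ℝ) ≠ 0 := ne_of_gt hkpos
    have hNne : (N:ℝ) ≠ 0 := ne_of_gt hNpos
    have hk1ne : (k:ℝ) + 1 ≠ 0 := by positivity
    field_simp
    ring
  -- limit
  have hycc : Tendsto y atTop (cocompact (Ed d)) := by
    apply tendsto_cocompact_of_tendsto_dist_comp_atTop (0 : Ed d)
    simp only [dist_zero_right]
    apply tendsto_atTop_mono (fun n => le_of_eq (hynorm n).symm)
    exact tendsto_atTop_add_const_right atTop C tendsto_natCast_atTop_atTop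
  have hφy : Tendsto (fun n => φ (y n)) atTop (𝓝 0) := hφ.2.comp hycc
  have hsum0 : Tendsto (fun n => ∑ i, (dist (x i) (y n))⁻¹) atTop (𝓝 0) := by
    have : Tendsto (fun n => ∑ i : Fin k, (dist (x i) (y n))⁻¹) atTop
        (𝓝 (∑ i : Fin k, (0:ℝ))) := by
      apply tendsto_finset_sum
      intro i _
      apply Tendsto.inv_tendsto_atTop
      apply tendsto_atTop_mono (hdist · i)
      exact tendsto_atTop_add_const_right atTop 1 tendsto_natCast_atTop_atTop
    simpa using this
  have hlim : Tendsto f atTop (𝓝 ((∑ i, ((k : ℝ) / N) * φ (x i)) / (k : ℝ)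
      - (coulomb d k x).toReal)) := by
    have h1 : Tendsto (fun n => ((∑ i, ((k : ℝ) / N) * φ (x i)) / (k : ℝ)
        - (coulomb d k x).toReal) + φ (y n) / N - ∑ i, (dist (x i) (y n))⁻¹) atTop
        (𝓝 (((∑ i, ((k : ℝ) / N) * φ (x i)) / (k : ℝ) - (coulomb d k x).toReal) + 0 / N - 0)) := by
      exact ((tendsto_const_nhds.add (hφy.div_const N)).sub hsum0)
    simp only [zero_div, add_zero, sub_zero] at h1
    exact h1.congr (fun n => (hfeq n).symm)
  exact le_of_tendsto hlim (Eventually.of_forall hle)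

/-- **monotonicity of the M_k chain.** For φ ∈ C₀, N ≥ 2 and
1 ≤ k ≤ N - 1, one has `M_k((k/N)φ) ≤ M_{k+1}(((k+1)/N)φ)`; consequently
`M_1(φ/N) ≤ M_2((2/N)φ) ≤ … ≤ M_N(φ)`, i.e. the chain is monotone:
`M_k((k/N)φ) ≤ M_l((l/N)φ)` whenever 1 ≤ k ≤ l ≤ N. -/
theorem Mfun_chain_mono (d N : ℕ) (hd : 1 ≤ d) (hN : 2 ≤ N)
    (φ : Ed d → ℝ) (hφ : IsC0 d φ) :
    (∀ k : ℕ, 1 ≤ k → k ≤ N - 1 →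
      Mfun d k (fun x => ((k : ℝ) / N) * φ x)
        ≤ Mfun d (k + 1) (fun x => (((k : ℝ) + 1) / N) * φ x)) ∧
    (∀ k l : ℕ, 1 ≤ k → k ≤ l → l ≤ N →
      Mfun d k (fun x => ((k : ℝ) / N) * φ x)
        ≤ Mfun d l (fun x => ((l : ℝ) / N) * φ x)) := by
  have hN1 : 1 ≤ N := by omega
  constructor
  · intro k hk _
    exact Mfun_step d N k hd hN1 hk φ hφ
  · intro k l hk hkl hlN
    clear hlN
    induction l, hkl using Nat.le_induction with
    | base => exact le_refl _
    | succ n hn ih =>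
      refine le_trans ih ?_
      have hstep := Mfun_step d N n hd hN1 (hk.trans hn) φ hφ
      push_cast
      exact hstep

end
end

section
/- For every integer k ≥ 1 and every ψ ∈ C₀, M_k(ψ) = M_k(ψ₊), where ψ₊ = max{ψ, 0} is the positive part of ψ. -/
open MeasureTheory Filter Topology OnePoint
open scoped ENNReal NNReal

noncomputable section

/-- distinct natural numbers differ by at least 1 as reals -/
lemma aux_nat_abs_sub {m n : ℕ} (h : m ≠ n) : (1:ℝ) ≤ |(m:ℝ) - n| := by
  rcases h.lt_or_gt with h | h
  · have : (m:ℝ) + 1 ≤ n := by exact_mod_cast h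
    rw [abs_sub_comm, abs_of_pos (by linarith)]; linarith
  · have : (n:ℝ) + 1 ≤ m := by exact_mod_cast h
    rw [abs_of_pos (by linarith)]; linarith

/-- the sup set of `Mfun` is nonempty -/
lemma aux_nonempty (d k : ℕ) (hd : 1 ≤ d) (φ : Ed d → ℝ) :
    Set.Nonempty { r : ℝ | ∃ x : Fin k → Ed d, coulomb d k x ≠ ⊤ ∧
      r = (∑ i, φ (x i)) / (k : ℝ) - (coulomb d k x).toReal } := by
  set e : Ed d := EuclideanSpace.single ⟨0, hd⟩ 1 with he
  have hne : ‖e‖ = 1 := by simp [he, EuclideanSpace.norm_single]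
  have he0 : e ≠ 0 := by intro h; rw [h] at hne; simp at hne
  set x : Fin k → Ed d := fun i => ((i:ℕ):ℝ) • e with hx
  have hfin : coulomb d k x ≠ ⊤ := by
    rw [coulomb, Ne, ENNReal.sum_eq_top]
    rintro ⟨i, -, hi⟩
    rw [ENNReal.sum_eq_top] at hi
    obtain ⟨j, -, hj⟩ := hi
    by_cases hij : i < j
    · rw [if_pos hij] at hj
      rw [ENNReal.inv_eq_top, edist_eq_zero] at hj
      have : (((i:ℕ):ℝ) - ((j:ℕ):ℝ)) • e = 0 := by
        rw [sub_smul, hx] at *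
        simp only [hj]
        simp
      rcases smul_eq_zero.mp this with h | h
      · have : ((i:ℕ):ℝ) = ((j:ℕ):ℝ) := by linarith [sub_eq_zero.mp h]
        have : (i:ℕ) = (j:ℕ) := by exact_mod_cast this
        omega
      · exact he0 h
    · rw [if_neg hij] at hj; simp at hj
  exact ⟨_, x, hfin, rfl⟩

/-- upper bound -/
lemma aux_bdd (d k : ℕ) (hk : 1 ≤ k) (φ : Ed d → ℝ) (B : ℝ) (hB0 : 0 ≤ B)
    (hB : ∀ y, φ y ≤ B) :
    BddAbove { r : ℝ | ∃ x : Fin k → Ed d, coulomb d k x ≠ ⊤ ∧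
      r = (∑ i, φ (x i)) / (k : ℝ) - (coulomb d k x).toReal } := by
  refine ⟨B, ?_⟩
  rintro r ⟨x, hx, rfl⟩
  have hk0 : (0:ℝ) < k := by exact_mod_cast hk
  have hsum : (∑ i, φ (x i)) ≤ k * B := by
    calc (∑ i, φ (x i)) ≤ ∑ _i : Fin k, B := Finset.sum_le_sum fun i _ => hB (x i)
    _ = k * B := by simp [Finset.sum_const, Finset.card_univ, nsmul_eq_mul]
  have h1 : (∑ i, φ (x i)) / (k:ℝ) ≤ B := by
    rw [div_le_iff₀ hk0]; linarith
  have h2 : 0 ≤ (coulomb d k x).toReal := ENNReal.toReal_nonneg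
  linarith

/-- a C₀ function is bounded in absolute value -/
lemma aux_C0_bdd (d : ℕ) (ψ : Ed d → ℝ) (hψ : IsC0 d ψ) :
    ∃ B : ℝ, 0 ≤ B ∧ ∀ y, |ψ y| ≤ B := by
  have h1 : ψ ⁻¹' Metric.ball (0:ℝ) 1 ∈ cocompact (Ed d) :=
    hψ.2 (Metric.ball_mem_nhds (0:ℝ) one_pos)
  rw [mem_cocompact] at h1
  obtain ⟨K, hK, hKsub⟩ := h1
  obtain ⟨C, hC⟩ := hK.exists_bound_of_continuousOn hψ.1.continuousOn
  refine ⟨max C 1, le_trans zero_le_one (le_max_right _ _), fun y => ?_⟩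
  by_cases hy : y ∈ K
  · exact le_trans (hC y hy) (le_max_left _ _)
  · have := hKsub hy
    simp only [Set.mem_preimage, Metric.mem_ball, Real.dist_eq, sub_zero] at this
    exact le_trans this.le (le_max_right _ _)

/-- the key construction: moving the negative-value points far away -/
lemma aux_key (d k : ℕ) (hd : 1 ≤ d) (hk : 1 ≤ k) (ψ : Ed d → ℝ) (hψ : IsC0 d ψ)
    (x : Fin k → Ed d) (hx : coulomb d k x ≠ ⊤) (ε : ℝ) (hε : 0 < ε) :
    ∃ x' : Fin k → Ed d, coulomb d k x' ≠ ⊤ ∧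
      (∑ i, max (ψ (x i)) 0) / (k : ℝ) - (coulomb d k x).toReal ≤
      (∑ i, ψ (x' i)) / (k : ℝ) - (coulomb d k x').toReal + ε := by
  have hk0 : (0:ℝ) < k := by exact_mod_cast hk
  -- a unit direction
  set e : Ed d := EuclideanSpace.single ⟨0, hd⟩ 1 with he
  have hne : ‖e‖ = 1 := by simp [he, EuclideanSpace.norm_single]
  -- small values outside a ball of radius R
  have h1 : ψ ⁻¹' Metric.ball (0:ℝ) (ε/2) ∈ cocompact (Ed d) :=
    hψ.2 (Metric.ball_mem_nhds (0:ℝ) (by linarith))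
  rw [mem_cocompact] at h1
  obtain ⟨K, hK, hKsub⟩ := h1
  obtain ⟨R, hR⟩ := hK.isBounded.subset_closedBall 0
  have hsmall : ∀ y : Ed d, R < ‖y‖ → |ψ y| < ε/2 := by
    intro y hy
    have hyK : y ∉ K := by
      intro h
      have := hR h
      rw [Metric.mem_closedBall, dist_zero_right] at this
      linarith
    have := hKsub hyK
    simpa [Real.dist_eq, sub_zero] using this
  -- bound on the norms of the original points
  obtain ⟨N, hN⟩ := Finite.exists_le fun i : Fin k => ‖x i‖
  set N' : ℝ := max N 0 with hN'
  have hN'0 : 0 ≤ N' := le_max_right _ _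
  have hNN' : ∀ i, ‖x i‖ ≤ N' := fun i => le_trans (hN i) (le_max_left _ _)
  -- large separation
  set T : ℝ := max 1 (2*(k:ℝ)^2/ε) with hT
  have hT1 : (1:ℝ) ≤ T := le_max_left _ _
  have hT0 : (0:ℝ) < T := lt_of_lt_of_le one_pos hT1
  have hTk : (k:ℝ) * ((k:ℝ) * (1/T)) ≤ ε/2 := by
    have h2 : 2*(k:ℝ)^2/ε ≤ T := le_max_right _ _
    rw [div_le_iff₀ hε] at h2
    have : (k:ℝ) * ((k:ℝ) * (1/T)) = (k:ℝ)^2 / T := by ring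
    rw [this, div_le_iff₀ hT0]
    nlinarith
  -- the far-away points
  set c : Fin k → ℝ := fun i => max R 0 + N' + ((i:ℕ) + 1) * T with hc
  set y : Fin k → Ed d := fun i => (c i) • e with hy
  have hc_ge : ∀ i, max R 0 + N' + T ≤ c i := by
    intro i
    have : T ≤ ((i:ℕ) + 1) * T := by
      have h1 : (1:ℝ) ≤ ((i:ℕ):ℝ) + 1 := by
        have := Nat.cast_nonneg (α := ℝ) (i:ℕ); linarith
      nlinarith
    simp only [hc]; linarith
  have hnormy : ∀ i, ‖y i‖ = c i := by
    intro i
    have hci : 0 < c i := by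
      have := hc_ge i
      have := le_max_right R 0
      nlinarith [le_max_left R 0, le_max_right R 0]
    rw [hy]; simp only [norm_smul, hne, mul_one, Real.norm_eq_abs, abs_of_pos hci]
  have hyR : ∀ i, R < ‖y i‖ := by
    intro i
    rw [hnormy]
    have := hc_ge i
    have h1 := le_max_left R 0
    linarith
  -- the modified configuration
  set x' : Fin k → Ed d := fun i => if ψ (x i) < 0 then y i else x i with hx'
  -- distances between modified pairs are at least T
  have hdist : ∀ i j : Fin k, i ≠ j → (ψ (x i) < 0 ∨ ψ (x j) < 0) →
      T ≤ dist (x' i) (x' j) := by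
    have hyy : ∀ i j : Fin k, i ≠ j → T ≤ dist (y i) (y j) := by
      intro i j hij
      have : dist (y i) (y j) = |c i - c j| := by
        rw [hy, dist_eq_norm, ← sub_smul, norm_smul, hne, mul_one, Real.norm_eq_abs]
      rw [this]
      have : c i - c j = (((i:ℕ):ℝ) - ((j:ℕ):ℝ)) * T := by rw [hc]; ring
      rw [this, abs_mul, abs_of_pos hT0]
      have h1 : (1:ℝ) ≤ |((i:ℕ):ℝ) - ((j:ℕ):ℝ)| :=
        aux_nat_abs_sub (fun h => hij (Fin.ext h))
      nlinarith
    have hyx : ∀ i j : Fin k, T ≤ dist (y i) (x j) := by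
      intro i j
      have h1 : ‖y i‖ - ‖x j‖ ≤ ‖y i - x j‖ := norm_sub_norm_le _ _
      rw [dist_eq_norm]
      have h2 := hnormy i
      have h3 := hc_ge i
      have h4 := hNN' j
      have h5 := le_max_right R 0
      linarith
    intro i j hij hneg
    rw [hx']
    by_cases hi : ψ (x i) < 0 <;> by_cases hj : ψ (x j) < 0 <;>
      simp only [if_pos, if_neg, hi, hj, if_true, if_false]
    · exact hyy i j hij
    · exact hyx i j
    · rw [dist_comm]; exact hyx j i
    · tauto
  -- per-term bound on the coulomb cost
  have hterm : ∀ i j : Fin k,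
      (if i < j then (edist (x' i) (x' j))⁻¹ else 0) ≤
      (if i < j then (edist (x i) (x j))⁻¹ else 0) + ENNReal.ofReal (1/T) := by
    intro i j
    by_cases hij : i < j
    · rw [if_pos hij, if_pos hij]
      by_cases hneg : ψ (x i) < 0 ∨ ψ (x j) < 0
      · have hd' := hdist i j (ne_of_lt hij) hneg
        have h1 : ENNReal.ofReal T ≤ edist (x' i) (x' j) := by
          rw [edist_dist]; exact ENNReal.ofReal_le_ofReal hd'
        have h2 : (edist (x' i) (x' j))⁻¹ ≤ (ENNReal.ofReal T)⁻¹ :=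
          ENNReal.inv_le_inv' h1
        have h3 : (ENNReal.ofReal T)⁻¹ = ENNReal.ofReal (1/T) := by
          rw [one_div, ← ENNReal.ofReal_inv_of_pos hT0]
        calc (edist (x' i) (x' j))⁻¹ ≤ ENNReal.ofReal (1/T) := h3 ▸ h2
        _ ≤ _ := le_add_self
      · push_neg at hneg
        have hxi : x' i = x i := by rw [hx']; simp [not_lt.mpr hneg.1]
        have hxj : x' j = x j := by rw [hx']; simp [not_lt.mpr hneg.2]
        rw [hxi, hxj]; exact le_self_add
    · rw [if_neg hij, if_neg hij]; exact zero_le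
  have hcoul : coulomb d k x' ≤ coulomb d k x + (k:ℝ≥0∞) * ((k:ℝ≥0∞) * ENNReal.ofReal (1/T)) := by
    calc coulomb d k x'
        ≤ ∑ i : Fin k, ∑ j : Fin k,
            ((if i < j then (edist (x i) (x j))⁻¹ else 0) + ENNReal.ofReal (1/T)) :=
          Finset.sum_le_sum fun i _ => Finset.sum_le_sum fun j _ => hterm i j
      _ = coulomb d k x + (k:ℝ≥0∞) * ((k:ℝ≥0∞) * ENNReal.ofReal (1/T)) := by
          rw [coulomb]
          simp [Finset.sum_add_distrib, Finset.sum_const, Finset.card_univ,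
            nsmul_eq_mul, mul_assoc]
  have hofT : ENNReal.ofReal (1/T) ≠ ⊤ := ENNReal.ofReal_ne_top
  have hRHS : coulomb d k x + (k:ℝ≥0∞) * ((k:ℝ≥0∞) * ENNReal.ofReal (1/T)) ≠ ⊤ := by
    apply ENNReal.add_ne_top.mpr
    exact ⟨hx, ENNReal.mul_ne_top (ENNReal.natCast_ne_top k)
      (ENNReal.mul_ne_top (ENNReal.natCast_ne_top k) hofT)⟩
  have hfin' : coulomb d k x' ≠ ⊤ := fun h => hRHS (top_le_iff.mp (h ▸ hcoul))
  -- toReal bound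
  have hcoulR : (coulomb d k x').toReal ≤ (coulomb d k x).toReal + ε/2 := by
    have h1 : (coulomb d k x').toReal ≤
        (coulomb d k x + (k:ℝ≥0∞) * ((k:ℝ≥0∞) * ENNReal.ofReal (1/T))).toReal :=
      ENNReal.toReal_mono hRHS hcoul
    have h2 : (coulomb d k x + (k:ℝ≥0∞) * ((k:ℝ≥0∞) * ENNReal.ofReal (1/T))).toReal
        = (coulomb d k x).toReal + (k:ℝ) * ((k:ℝ) * (1/T)) := by
      rw [ENNReal.toReal_add hx (ENNReal.mul_ne_top (ENNReal.natCast_ne_top k)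
        (ENNReal.mul_ne_top (ENNReal.natCast_ne_top k) hofT)),
        ENNReal.toReal_mul, ENNReal.toReal_mul,
        ENNReal.toReal_ofReal (by positivity : (0:ℝ) ≤ 1/T)]
      simp
    rw [h2] at h1
    linarith
  -- sum bound
  have hsum : (∑ i, max (ψ (x i)) 0) - (k:ℝ) * (ε/2) ≤ ∑ i, ψ (x' i) := by
    have hptwise : ∀ i : Fin k, max (ψ (x i)) 0 - ε/2 ≤ ψ (x' i) := by
      intro i
      by_cases hi : ψ (x i) < 0
      · have hxi : x' i = y i := by rw [hx']; simp [hi]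
        have := hsmall (y i) (hyR i)
        rw [hxi]
        have hm : max (ψ (x i)) 0 = 0 := max_eq_right hi.le
        rw [hm]
        have := abs_lt.mp this
        linarith [this.1]
      · have hxi : x' i = x i := by rw [hx']; simp [hi]
        rw [hxi]
        have hm : max (ψ (x i)) 0 = ψ (x i) := max_eq_left (not_lt.mp hi)
        rw [hm]; linarith
    calc (∑ i, max (ψ (x i)) 0) - (k:ℝ) * (ε/2)
        = ∑ i : Fin k, (max (ψ (x i)) 0 - ε/2) := by
          rw [Finset.sum_sub_distrib, Finset.sum_const, Finset.card_univ,
            Fintype.card_fin, nsmul_eq_mul]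
      _ ≤ ∑ i, ψ (x' i) := Finset.sum_le_sum fun i _ => hptwise i
  refine ⟨x', hfin', ?_⟩
  have hdiv : (∑ i, max (ψ (x i)) 0) / (k:ℝ) - ε/2 ≤ (∑ i, ψ (x' i)) / (k:ℝ) := by
    have h : ((∑ i, max (ψ (x i)) 0) - (k:ℝ) * (ε/2)) / (k:ℝ) ≤ (∑ i, ψ (x' i)) / (k:ℝ) := by
      gcongr
    have h2 : ((k:ℝ) * (ε/2)) / (k:ℝ) = ε/2 := mul_div_cancel_left₀ _ (ne_of_gt hk0)
    rw [sub_div, h2] at h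
    linarith
  linarith [hcoulR, hdiv]

/-- For every k ≥ 1 and ψ ∈ C₀, `M_k(ψ) = M_k(ψ₊)`. -/
theorem Mfun_posPart (d k : ℕ) (hd : 1 ≤ d) (hk : 1 ≤ k)
    (ψ : Ed d → ℝ) (hψ : IsC0 d ψ) :
    Mfun d k ψ = Mfun d k (fun x => max (ψ x) 0) := by
  have hk0 : (0:ℝ) < k := by exact_mod_cast hk
  obtain ⟨B, hB0, hB⟩ := aux_C0_bdd d ψ hψ
  have hBψ : ∀ y, ψ y ≤ B := fun y => le_trans (le_abs_self _) (hB y)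
  have hBψ' : ∀ y, max (ψ y) 0 ≤ B := fun y => max_le (hBψ y) hB0
  have hne1 := aux_nonempty d k hd ψ
  have hne2 := aux_nonempty d k hd (fun x => max (ψ x) 0)
  have hbdd1 := aux_bdd d k hk ψ B hB0 hBψ
  have hbdd2 := aux_bdd d k hk (fun x => max (ψ x) 0) B hB0 hBψ'
  apply le_antisymm
  · -- Mfun ψ ≤ Mfun ψ₊
    apply csSup_le hne1
    rintro r ⟨x, hx, rfl⟩
    have hmem : (∑ i, max (ψ (x i)) 0) / (k:ℝ) - (coulomb d k x).toReal ∈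
        { r : ℝ | ∃ x : Fin k → Ed d, coulomb d k x ≠ ⊤ ∧
          r = (∑ i, (fun z => max (ψ z) 0) (x i)) / (k : ℝ) - (coulomb d k x).toReal } :=
      ⟨x, hx, rfl⟩
    have hsumle : (∑ i, ψ (x i)) ≤ ∑ i, max (ψ (x i)) 0 :=
      Finset.sum_le_sum fun i _ => le_max_left _ _
    have hle : (∑ i, ψ (x i)) / (k:ℝ) ≤ (∑ i, max (ψ (x i)) 0) / (k:ℝ) :=
      div_le_div_of_nonneg_right hsumle (le_of_lt hk0)
    calc (∑ i, ψ (x i)) / (k:ℝ) - (coulomb d k x).toReal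
        ≤ (∑ i, max (ψ (x i)) 0) / (k:ℝ) - (coulomb d k x).toReal := by linarith
      _ ≤ Mfun d k (fun x => max (ψ x) 0) := le_csSup hbdd2 hmem
  · -- Mfun ψ₊ ≤ Mfun ψ
    apply csSup_le hne2
    rintro r ⟨x, hx, rfl⟩
    apply le_of_forall_pos_le_add
    intro ε hε
    obtain ⟨x', hfin', hle⟩ := aux_key d k hd hk ψ hψ x hx ε hε
    have hmem : (∑ i, ψ (x' i)) / (k:ℝ) - (coulomb d k x').toReal ∈
        { r : ℝ | ∃ x : Fin k → Ed d, coulomb d k x ≠ ⊤ ∧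
          r = (∑ i, ψ (x i)) / (k : ℝ) - (coulomb d k x).toReal } := ⟨x', hfin', rfl⟩
    calc (∑ i, (fun z => max (ψ z) 0) (x i)) / (k:ℝ) - (coulomb d k x).toReal
        ≤ (∑ i, ψ (x' i)) / (k:ℝ) - (coulomb d k x').toReal + ε := hle
      _ ≤ Mfun d k ψ + ε := by
          have h2 : (∑ i, ψ (x' i)) / (k:ℝ) - (coulomb d k x').toReal ≤ Mfun d k ψ :=
            le_csSup hbdd1 hmem
          linarith

end
end

section
/- Let φ : ℝ^d → ℝ be a Borel function bounded above and set φ^∞ := limsup_{|x|→+∞} φ(x). Then: (a) (1/N) sup φ + ((N−1)/N) φ^∞ ≤ M_N(φ) ≤ sup φ; and (b) (1/N) φ^∞ + M_{N−1}(((N−1)/N) φ) ≤ M_N(φ). -/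
open MeasureTheory Filter Topology OnePoint
open scoped ENNReal NNReal

noncomputable section

variable {d : ℕ}

lemma coulomb_ne_top_of_injective {k : ℕ} {x : Fin k → Ed d} (hx : Function.Injective x) :
    coulomb d k x ≠ ⊤ := by
  rw [coulomb]
  refine (ENNReal.sum_lt_top.mpr ?_).ne
  intro i _
  refine ENNReal.sum_lt_top.mpr ?_
  intro j _
  split
  · next h =>
    refine ENNReal.inv_lt_top.mpr ?_
    exact pos_iff_ne_zero.mpr (fun hez => (ne_of_lt h) (hx (edist_eq_zero.mp hez)))
  · simp

lemma exists_coulomb_ne_top (hd : 1 ≤ d) (k : ℕ) :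
    ∃ x : Fin k → Ed d, coulomb d k x ≠ ⊤ := by
  set v : Ed d := EuclideanSpace.single ⟨0, hd⟩ (1 : ℝ) with hv
  have hv0 : v ≠ 0 := by
    intro h
    have := congrArg (fun f => f ⟨0, hd⟩) h
    simp [hv, EuclideanSpace.single_apply] at this
  refine ⟨fun i => ((i : ℕ) : ℝ) • v, coulomb_ne_top_of_injective ?_⟩
  intro i j hij
  have := smul_left_injective ℝ hv0 hij
  exact Fin.val_injective (Nat.cast_injective this)

lemma valueSet_nonempty (hd : 1 ≤ d) (k : ℕ) (φ : Ed d → ℝ) :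
    Set.Nonempty { r : ℝ | ∃ x : Fin k → Ed d, coulomb d k x ≠ ⊤ ∧
      r = (∑ i, φ (x i)) / (k : ℝ) - (coulomb d k x).toReal } := by
  obtain ⟨x, hx⟩ := exists_coulomb_ne_top hd k
  exact ⟨_, x, hx, rfl⟩

lemma valueSet_bddAbove (k : ℕ) (hk : 1 ≤ k) (φ : Ed d → ℝ) (hbd : BddAbove (Set.range φ)) :
    BddAbove { r : ℝ | ∃ x : Fin k → Ed d, coulomb d k x ≠ ⊤ ∧
      r = (∑ i, φ (x i)) / (k : ℝ) - (coulomb d k x).toReal } := by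
  refine ⟨sSup (Set.range φ), ?_⟩
  rintro r ⟨x, hx, rfl⟩
  have hk0 : (0:ℝ) < k := by exact_mod_cast hk
  have h1 : (∑ i : Fin k, φ (x i)) ≤ k * sSup (Set.range φ) := by
    calc (∑ i : Fin k, φ (x i)) ≤ ∑ _i : Fin k, sSup (Set.range φ) :=
          Finset.sum_le_sum fun i _ => le_csSup hbd (Set.mem_range_self _)
    _ = k * sSup (Set.range φ) := by simp [mul_comm]
  have h2 : (∑ i : Fin k, φ (x i)) / (k:ℝ) ≤ sSup (Set.range φ) := by
    rw [div_le_iff₀ hk0]; linarith [h1]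
  have h3 : 0 ≤ (coulomb d k x).toReal := ENNReal.toReal_nonneg
  linarith

lemma exists_far (φ : Ed d → ℝ) (a R : ℝ)
    (ha : ∀ K : Set (Ed d), IsCompact K → ∃ z, z ∉ K ∧ a < φ z)
    (F : Set (Ed d)) (hF : F.Finite) :
    ∃ z, a < φ z ∧ ∀ f ∈ F, R ≤ dist z f := by
  obtain ⟨r, hr⟩ := hF.isBounded.subset_closedBall 0
  obtain ⟨z, hz, hza⟩ := ha (Metric.closedBall 0 (max r 0 + max R 0))
    (isCompact_closedBall _ _)
  refine ⟨z, hza, fun f hf => ?_⟩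
  have hzn : max r 0 + max R 0 < dist z 0 := by
    by_contra h
    exact hz (Metric.mem_closedBall.mpr (not_lt.mp h))
  have hfn : dist f 0 ≤ max r 0 := le_trans (Metric.mem_closedBall.mp (hr hf)) (le_max_left _ _)
  have htri : dist z 0 ≤ dist z f + dist f 0 := dist_triangle _ _ _
  have : max R 0 ≤ dist z f := by linarith
  exact le_trans (le_max_left _ _) this

lemma exists_sep_family (φ : Ed d → ℝ) (a R : ℝ)
    (ha : ∀ K : Set (Ed d), IsCompact K → ∃ z, z ∉ K ∧ a < φ z)
    (k m : ℕ) (w : Fin k → Ed d) :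
    ∃ y : Fin m → Ed d, (∀ i, a < φ (y i)) ∧
      (∀ i j, i ≠ j → R ≤ dist (y i) (y j)) ∧
      (∀ i j, R ≤ dist (y i) (w j)) := by
  induction m with
  | zero => exact ⟨Fin.elim0, fun i => i.elim0, fun i => i.elim0, fun i => i.elim0⟩
  | succ m ih =>
    obtain ⟨y, hy1, hy2, hy3⟩ := ih
    obtain ⟨z, hz1, hz2⟩ := exists_far φ a R ha (Set.range w ∪ Set.range y)
      ((Set.finite_range w).union (Set.finite_range y))
    refine ⟨Fin.snoc y z, ?_, ?_, ?_⟩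
    · intro i
      refine Fin.lastCases ?_ ?_ i
      · simpa using hz1
      · intro i; simpa using hy1 i
    · intro i j hij
      rcases Fin.eq_castSucc_or_eq_last i with ⟨i', rfl⟩ | rfl <;>
        rcases Fin.eq_castSucc_or_eq_last j with ⟨j', rfl⟩ | rfl
      · have : i' ≠ j' := fun h => hij (by rw [h])
        simpa using hy2 i' j' this
      · rw [dist_comm]
        simpa using hz2 (y i') (Set.mem_union_right _ (Set.mem_range_self _))
      · simpa using hz2 (y j') (Set.mem_union_right _ (Set.mem_range_self _))
      · exact absurd rfl hij
    · intro i j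
      refine Fin.lastCases ?_ ?_ i
      · simpa using hz2 (w j) (Set.mem_union_left _ (Set.mem_range_self _))
      · intro i; simpa using hy3 i j

lemma coulomb_append_le (k m : ℕ) (w : Fin k → Ed d) (y : Fin m → Ed d) (R : ℝ)
    (hsep1 : ∀ i j, i ≠ j → R ≤ dist (y i) (y j))
    (hsep2 : ∀ i j, R ≤ dist (y i) (w j)) :
    coulomb d (k + m) (Fin.append w y) ≤
      coulomb d k w + (((k + m) * (k + m) : ℕ) : ℝ≥0∞) * (ENNReal.ofReal R)⁻¹ := by
  have key : ∀ (u v : Ed d), R ≤ dist u v → (edist u v)⁻¹ ≤ (ENNReal.ofReal R)⁻¹ := by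
    intro u v h
    refine ENNReal.inv_le_inv' ?_
    rw [edist_dist]
    exact ENNReal.ofReal_le_ofReal h
  rw [coulomb, Fin.sum_univ_add]
  have hA : (∑ i : Fin k, ∑ j : Fin (k+m),
      if Fin.castAdd m i < j then (edist (Fin.append w y (Fin.castAdd m i)) (Fin.append w y j))⁻¹ else 0)
      ≤ coulomb d k w + (((k*m : ℕ)) : ℝ≥0∞) * (ENNReal.ofReal R)⁻¹ := by
    have : ∀ i : Fin k, (∑ j : Fin (k+m),
        if Fin.castAdd m i < j then (edist (Fin.append w y (Fin.castAdd m i)) (Fin.append w y j))⁻¹ else 0)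
        = (∑ j : Fin k, if i < j then (edist (w i) (w j))⁻¹ else 0)
          + ∑ j : Fin m, if Fin.castAdd m i < Fin.natAdd k j then (edist (w i) (y j))⁻¹ else 0 := by
      intro i
      rw [Fin.sum_univ_add]
      congr 1
      · refine Finset.sum_congr rfl fun j _ => ?_
        rw [Fin.append_left, Fin.append_left]
        congr 1
      · refine Finset.sum_congr rfl fun j _ => ?_
        rw [Fin.append_left, Fin.append_right]
    rw [Finset.sum_congr rfl fun i _ => this i, Finset.sum_add_distrib]
    rw [coulomb]
    gcongr
    calc (∑ i : Fin k, ∑ j : Fin m,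
        if Fin.castAdd m i < Fin.natAdd k j then (edist (w i) (y j))⁻¹ else 0)
        ≤ ∑ _i : Fin k, ∑ _j : Fin m, (ENNReal.ofReal R)⁻¹ := by
          gcongr with i _ j _
          split
          · exact key _ _ (by rw [dist_comm]; exact hsep2 j i)
          · exact zero_le
      _ = ((k*m : ℕ) : ℝ≥0∞) * (ENNReal.ofReal R)⁻¹ := by
          simp [Finset.sum_const, mul_assoc]
  have hB : (∑ i : Fin m, ∑ j : Fin (k+m),
      if Fin.natAdd k i < j then (edist (Fin.append w y (Fin.natAdd k i)) (Fin.append w y j))⁻¹ else 0)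
      ≤ (((m*m : ℕ)) : ℝ≥0∞) * (ENNReal.ofReal R)⁻¹ := by
    have hin : ∀ i : Fin m, (∑ j : Fin (k+m),
        if Fin.natAdd k i < j then (edist (Fin.append w y (Fin.natAdd k i)) (Fin.append w y j))⁻¹ else 0)
        ≤ ∑ _j : Fin m, (ENNReal.ofReal R)⁻¹ := by
      intro i
      rw [Fin.sum_univ_add]
      have h0 : (∑ j : Fin k, if Fin.natAdd k i < Fin.castAdd m j then
          (edist (Fin.append w y (Fin.natAdd k i)) (Fin.append w y (Fin.castAdd m j)))⁻¹ else 0) = 0 := by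
        refine Finset.sum_eq_zero fun j _ => ?_
        rw [if_neg]
        intro h
        have hj := j.isLt
        rw [Fin.lt_def] at h
        simp only [Fin.coe_natAdd, Fin.coe_castAdd] at h
        omega
      rw [h0, zero_add]
      gcongr with j hj
      split
      · next h =>
        rw [Fin.append_right, Fin.append_right]
        refine key _ _ (hsep1 i j ?_)
        intro he
        rw [he] at h
        exact lt_irrefl _ h
      · exact zero_le
    calc _ ≤ ∑ _i : Fin m, ∑ _j : Fin m, (ENNReal.ofReal R)⁻¹ :=
          Finset.sum_le_sum fun i _ => hin i
      _ = ((m*m : ℕ) : ℝ≥0∞) * (ENNReal.ofReal R)⁻¹ := by simp [Finset.sum_const, mul_assoc]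
  calc _ ≤ (coulomb d k w + ((k*m : ℕ) : ℝ≥0∞) * (ENNReal.ofReal R)⁻¹)
        + ((m*m : ℕ) : ℝ≥0∞) * (ENNReal.ofReal R)⁻¹ := add_le_add hA hB
    _ = coulomb d k w + (((k*m + m*m : ℕ)) : ℝ≥0∞) * (ENNReal.ofReal R)⁻¹ := by
        push_cast
        ring
    _ ≤ coulomb d k w + (((k + m) * (k + m) : ℕ) : ℝ≥0∞) * (ENNReal.ofReal R)⁻¹ := by
        have hle : (k*m + m*m : ℕ) ≤ ((k+m)*(k+m) : ℕ) := by nlinarith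
        gcongr

lemma core (hd : 1 ≤ d) (φ : Ed d → ℝ) (hbd : BddAbove (Set.range φ))
    (k m : ℕ) (hm : 1 ≤ m) (w : Fin k → Ed d) (hw : coulomb d k w ≠ ⊤)
    (a : ℝ) (ha : ∀ K : Set (Ed d), IsCompact K → ∃ z, z ∉ K ∧ a < φ z) :
    ((∑ i, φ (w i)) + (m : ℝ) * a) / ((k + m : ℕ) : ℝ) - (coulomb d k w).toReal
      ≤ Mfun d (k + m) φ := by
  refine le_of_forall_pos_le_add fun ε hε => ?_
  set n2 : ℕ := (k + m) * (k + m) with hn2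
  set R : ℝ := max 1 ((n2 : ℝ) / ε) with hRdef
  have hR1 : (1:ℝ) ≤ R := le_max_left _ _
  have hR0 : (0:ℝ) < R := lt_of_lt_of_le one_pos hR1
  have hRε : (n2 : ℝ) / R ≤ ε := by
    rw [div_le_iff₀ hR0]
    calc (n2:ℝ) = (n2 / ε) * ε := by field_simp
      _ ≤ ε * R := by
          have : (n2:ℝ)/ε ≤ R := le_max_right _ _
          nlinarith
  obtain ⟨y, hy1, hy2, hy3⟩ := exists_sep_family φ a R ha k m w
  set x := Fin.append w y with hx
  have hcb := coulomb_append_le k m w y R hy2 hy3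
  have hinvtop : ((n2 : ℕ) : ℝ≥0∞) * (ENNReal.ofReal R)⁻¹ ≠ ⊤ := by
    refine ENNReal.mul_ne_top (by simp) ?_
    rw [ENNReal.inv_ne_top]
    exact (ENNReal.ofReal_pos.mpr hR0).ne'
  have hsumtop : coulomb d k w + ((n2 : ℕ) : ℝ≥0∞) * (ENNReal.ofReal R)⁻¹ ≠ ⊤ :=
    ENNReal.add_ne_top.mpr ⟨hw, hinvtop⟩
  have hxt : coulomb d (k + m) x ≠ ⊤ := ne_top_of_le_ne_top hsumtop hcb
  have htr : (coulomb d (k + m) x).toReal ≤ (coulomb d k w).toReal + (n2:ℝ)/R := by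
    have h2 := ENNReal.toReal_mono hsumtop hcb
    rw [ENNReal.toReal_add hw hinvtop, ENNReal.toReal_mul, ENNReal.toReal_inv,
      ENNReal.toReal_ofReal hR0.le] at h2
    refine h2.trans (le_of_eq ?_)
    simp [div_eq_mul_inv]
  have hsum : (∑ i, φ (w i)) + (m:ℝ) * a ≤ ∑ i : Fin (k + m), φ (x i) := by
    have hsplit : ∑ i : Fin (k + m), φ (x i)
        = (∑ i : Fin k, φ (w i)) + ∑ j : Fin m, φ (y j) := by
      rw [hx, Fin.sum_univ_add]
      congr 1
      · exact Finset.sum_congr rfl fun i _ => by rw [Fin.append_left]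
      · exact Finset.sum_congr rfl fun j _ => by rw [Fin.append_right]
    have hma : (m:ℝ) * a ≤ ∑ j : Fin m, φ (y j) := by
      calc (m:ℝ) * a = ∑ _j : Fin m, a := by simp [mul_comm]
        _ ≤ _ := Finset.sum_le_sum fun j _ => (hy1 j).le
    rw [hsplit]
    linarith
  have hkm : (0:ℝ) < ((k + m : ℕ) : ℝ) := by
    have : 0 < k + m := by omega
    exact_mod_cast this
  have hmem : ((∑ i : Fin (k+m), φ (x i)) / ((k + m : ℕ) : ℝ) - (coulomb d (k+m) x).toReal)
      ≤ Mfun d (k + m) φ := by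
    refine le_csSup (valueSet_bddAbove (k + m) (by omega) φ hbd) ?_
    exact ⟨x, hxt, rfl⟩
  have hdiv : ((∑ i, φ (w i)) + (m:ℝ) * a) / ((k + m : ℕ) : ℝ)
      ≤ (∑ i : Fin (k+m), φ (x i)) / ((k + m : ℕ) : ℝ) := by
    gcongr
  linarith

lemma elem_le (k : ℕ) (hk : 1 ≤ k) (φ : Ed d → ℝ) (hbd : BddAbove (Set.range φ)) :
    ∀ r ∈ { r : ℝ | ∃ x : Fin k → Ed d, coulomb d k x ≠ ⊤ ∧
      r = (∑ i, φ (x i)) / (k : ℝ) - (coulomb d k x).toReal }, r ≤ sSup (Set.range φ) := by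
  rintro r ⟨x, hx, rfl⟩
  have hk0 : (0:ℝ) < k := by exact_mod_cast hk
  have h1 : (∑ i : Fin k, φ (x i)) ≤ k * sSup (Set.range φ) := by
    calc (∑ i : Fin k, φ (x i)) ≤ ∑ _i : Fin k, sSup (Set.range φ) :=
          Finset.sum_le_sum fun i _ => le_csSup hbd (Set.mem_range_self _)
    _ = k * sSup (Set.range φ) := by simp [mul_comm]
  have h2 : (∑ i : Fin k, φ (x i)) / (k:ℝ) ≤ sSup (Set.range φ) := by
    rw [div_le_iff₀ hk0]; linarith [h1]
  have h3 : 0 ≤ (coulomb d k x).toReal := ENNReal.toReal_nonneg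
  linarith

lemma Mfun_le_sSup (hd : 1 ≤ d) (k : ℕ) (hk : 1 ≤ k) (φ : Ed d → ℝ)
    (hbd : BddAbove (Set.range φ)) : Mfun d k φ ≤ sSup (Set.range φ) :=
  csSup_le (valueSet_nonempty hd k φ) (elem_le k hk φ hbd)



/-- For a Borel function φ bounded above, with
`φ^∞ = limsup_{|x|→∞} φ(x)` (computed in the extended reals, since it may be -∞):
(a) `(1/N) sup φ + ((N-1)/N) φ^∞ ≤ M_N(φ) ≤ sup φ`;
(b) `(1/N) φ^∞ + M_{N-1}(((N-1)/N) φ) ≤ M_N(φ)`. -/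
theorem Mfun_bounds (d N : ℕ) (hd : 1 ≤ d) (hN : 2 ≤ N)
    (φ : Ed d → ℝ) (hmeas : Measurable φ) (hbd : BddAbove (Set.range φ)) :
    (((1 / (N : ℝ)) : EReal) * ((sSup (Set.range φ) : ℝ) : EReal)
        + ((((N : ℝ) - 1) / N : ℝ) : EReal)
            * Filter.limsup (fun x => ((φ x : ℝ) : EReal)) (cocompact (Ed d))
      ≤ ((Mfun d N φ : ℝ) : EReal)) ∧
    Mfun d N φ ≤ sSup (Set.range φ) ∧
    (((1 / (N : ℝ)) : EReal)
        * Filter.limsup (fun x => ((φ x : ℝ) : EReal)) (cocompact (Ed d))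
        + ((Mfun d (N - 1) (fun x => (((N : ℝ) - 1) / N) * φ x) : ℝ) : EReal)
      ≤ ((Mfun d N φ : ℝ) : EReal)) := by
  set L := Filter.limsup (fun x => ((φ x : ℝ) : EReal)) (cocompact (Ed d)) with hLdef
  have hNR : (0:ℝ) < N := by exact_mod_cast (by omega : 0 < N)
  have hN2R : (2:ℝ) ≤ N := by exact_mod_cast hN
  have hub : Mfun d N φ ≤ sSup (Set.range φ) := Mfun_le_sSup hd N (by omega) φ hbd
  have hLtop : L ≠ ⊤ := by
    have hle : L ≤ ((sSup (Set.range φ) : ℝ) : EReal) := by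
      refine Filter.limsup_le_of_le (by isBoundedDefault) ?_
      filter_upwards with x
      exact EReal.coe_le_coe_iff.mpr (le_csSup hbd ⟨x, rfl⟩)
    exact ne_top_of_le_ne_top (EReal.coe_ne_top _) hle
  have haprop : ∀ a : ℝ, (a : EReal) < L →
      ∀ K : Set (Ed d), IsCompact K → ∃ z, z ∉ K ∧ a < φ z := by
    intro a haL K hK
    have hfreq : ∃ᶠ x in cocompact (Ed d), (a:EReal) < ((φ x : ℝ) : EReal) :=
      Filter.frequently_lt_of_lt_limsup (by isBoundedDefault) haL
    have hKc : Kᶜ ∈ cocompact (Ed d) := hK.compl_mem_cocompact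
    obtain ⟨z, hz1, hz2⟩ :=
      (hfreq.and_eventually (Filter.eventually_of_mem hKc fun x hx => hx)).exists
    exact ⟨z, hz2, EReal.coe_lt_coe_iff.mp hz1⟩
  -- part (a), real version
  have partA_real : ∀ ℓ : ℝ, L = (ℓ:EReal) →
      (1/(N:ℝ)) * sSup (Set.range φ) + (((N:ℝ)-1)/N) * ℓ ≤ Mfun d N φ := by
    intro ℓ hℓ
    refine le_of_forall_pos_le_add fun ε hε => ?_
    set s := sSup (Set.range φ) with hs
    have hne : (Set.range φ).Nonempty := Set.range_nonempty _
    obtain ⟨_, ⟨x1, rfl⟩, hx1⟩ := exists_lt_of_lt_csSup hne (show s - ε < s by linarith)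
    have haℓ : ((ℓ - ε : ℝ) : EReal) < L := by
      rw [hℓ]
      exact_mod_cast (by linarith : ℓ - ε < ℓ)
    have ha := haprop _ haℓ
    have hw : coulomb d 1 (fun _ => x1) ≠ ⊤ :=
      coulomb_ne_top_of_injective fun i j _ => Subsingleton.elim i j
    have hc1 : coulomb d 1 (fun _ => x1 : Fin 1 → Ed d) = 0 := by
      rw [coulomb]
      simp [Fin.lt_def]
    have hcore := core hd φ hbd 1 (N-1) (by omega) (fun _ => x1) hw (ℓ - ε) ha
    have hN1 : 1 + (N - 1) = N := by omega
    rw [hN1, hc1] at hcore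
    simp only [Fin.sum_univ_one, ENNReal.toReal_zero, sub_zero] at hcore
    have hcast : ((N - 1 : ℕ) : ℝ) = (N:ℝ) - 1 := by
      have h1 : (1:ℕ) ≤ N := by omega
      push_cast [h1]
      ring
    rw [hcast] at hcore
    -- hcore : (φ x1 + ((N:ℝ)-1) * (ℓ - ε)) / (N:ℝ) ≤ Mfun d N φ
    rw [div_le_iff₀ hNR] at hcore
    have hgoal : (1/(N:ℝ)) * s + (((N:ℝ)-1)/N) * ℓ = (s + ((N:ℝ)-1) * ℓ)/N := by ring
    rw [hgoal, div_le_iff₀ hNR]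
    nlinarith [hε, hx1, hcore]
  -- part (b), real version
  have partB_real : ∀ ℓ : ℝ, L = (ℓ:EReal) →
      (1/(N:ℝ)) * ℓ + Mfun d (N - 1) (fun x => (((N : ℝ) - 1) / N) * φ x) ≤ Mfun d N φ := by
    intro ℓ hℓ
    refine le_of_forall_pos_le_add fun ε hε => ?_
    set ψ : Ed d → ℝ := fun x => (((N : ℝ) - 1) / N) * φ x with hψ
    set M' := Mfun d (N - 1) ψ with hM'
    have hSne := valueSet_nonempty hd (N-1) ψ
    obtain ⟨r, hrS, hr⟩ := exists_lt_of_lt_csSup hSne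
      (show M' - ε/2 < Mfun d (N-1) ψ by rw [← hM']; linarith)
    obtain ⟨w, hw, hrw⟩ := hrS
    have haℓ : ((ℓ - ε/2 : ℝ) : EReal) < L := by
      rw [hℓ]
      exact_mod_cast (by linarith : ℓ - ε/2 < ℓ)
    have ha := haprop _ haℓ
    have hcore := core hd φ hbd (N-1) 1 le_rfl w hw (ℓ - ε/2) ha
    have hN1 : (N - 1) + 1 = N := by omega
    rw [hN1] at hcore
    simp only [Nat.cast_one, one_mul] at hcore
    have hcast : ((N - 1 : ℕ) : ℝ) = (N:ℝ) - 1 := by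
      have h1 : (1:ℕ) ≤ N := by omega
      push_cast [h1]
      ring
    have hNm1 : (0:ℝ) < (N:ℝ) - 1 := by linarith
    have hrel : (∑ i, ψ (w i)) / ((N - 1 : ℕ) : ℝ) = (∑ i, φ (w i)) / (N:ℝ) := by
      rw [hcast, hψ]
      simp only []
      rw [← Finset.mul_sum]
      field_simp
    rw [hrel] at hrw
    set T := (coulomb d (N-1) w).toReal with hT
    set A := (∑ i, φ (w i)) with hA
    -- hcore : (A + (ℓ - ε/2)) / N - T ≤ Mfun d N φ
    have hsplit : (A + (ℓ - ε/2)) / (N:ℝ) = A/(N:ℝ) + (ℓ - ε/2)/(N:ℝ) := by ring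
    rw [hsplit] at hcore
    have h1 : ℓ/(N:ℝ) - (ℓ - ε/2)/(N:ℝ) = (ε/2)/(N:ℝ) := by ring
    have h2 : (ε/2)/(N:ℝ) ≤ ε/2 := by
      apply div_le_self (by linarith)
      linarith
    have h3 : (1/(N:ℝ)) * ℓ = ℓ/(N:ℝ) := by ring
    rw [h3]
    -- hr : M' - ε/2 < r, hrw : r = A/N - T
    rw [hrw] at hr
    linarith
  -- assemble
  have hco : (1:EReal) / ((N:ℝ):EReal) = ((1/(N:ℝ) : ℝ):EReal) := by
    rw [EReal.coe_div]
    norm_num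
  refine ⟨?_, hub, ?_⟩
  · by_cases hb : L = ⊥
    · rw [hb, EReal.mul_bot_of_pos, EReal.add_bot]
      · exact bot_le
      · have : (0:ℝ) < ((N:ℝ)-1)/N := div_pos (by linarith) hNR
        exact_mod_cast this
    · obtain ⟨ℓ, hℓ⟩ : ∃ ℓ : ℝ, L = (ℓ:EReal) := ⟨L.toReal, (EReal.coe_toReal hLtop hb).symm⟩
      rw [hℓ, hco, ← EReal.coe_mul, ← EReal.coe_mul, ← EReal.coe_add]
      exact EReal.coe_le_coe_iff.mpr (partA_real ℓ hℓ)
  · by_cases hb : L = ⊥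
    · rw [hb, hco, EReal.mul_bot_of_pos, EReal.bot_add]
      · exact bot_le
      · have : (0:ℝ) < 1/(N:ℝ) := by positivity
        exact_mod_cast this
    · obtain ⟨ℓ, hℓ⟩ : ∃ ℓ : ℝ, L = (ℓ:EReal) := ⟨L.toReal, (EReal.coe_toReal hLtop hb).symm⟩
      rw [hℓ, hco, ← EReal.coe_mul, ← EReal.coe_add]
      exact EReal.coe_le_coe_iff.mpr (partB_real ℓ hℓ)


end
end

section
/- For every R > 0 there exists a constant γ_N(R) such that for every φ ∈ C₀ with φ ≤ R, the regularized function φ̂ is Lipschitz continuous on ℝ^d with Lipschitz constant at most γ_N(R); in other words, { φ̂ : φ ∈ C₀, φ ≤ R } is contained in the set of γ_N(R)-Lipschitz functions on ℝ^d. -/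
set_option maxHeartbeats 1000000


open MeasureTheory Filter Topology OnePoint
open scoped ENNReal NNReal

noncomputable section

/-- `N c_N(x, y_1, …, y_{N-1})` written with the first point separated:
`N (Σ_i 1/|x - y_i| + c_{N-1}(y))`. -/
def headCost (d m : ℕ) (x : Ed d) (y : Fin m → Ed d) : ℝ≥0∞ :=
  (∑ i : Fin m, (edist x (y i))⁻¹) + coulomb d m y

/-- The regularization `φ̂(x) = inf_{x_2,…,x_N} { N c_N(x,x_2,…,x_N) - Σ_{i≥2} φ(x_i) }
+ N M_{N-1}(((N-1)/N) φ)` of a function φ ∈ C₀ (tuples of infinite cost contribute +∞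
and hence are discarded from the infimum). -/
def hatphi (d N : ℕ) (φ : Ed d → ℝ) (x : Ed d) : ℝ :=
  sInf { r : ℝ | ∃ y : Fin (N - 1) → Ed d, headCost d (N - 1) x y ≠ ⊤ ∧
      r = (N : ℝ) * (headCost d (N - 1) x y).toReal - ∑ i, φ (y i) }
    + (N : ℝ) * Mfun d (N - 1) (fun z => (((N : ℝ) - 1) / N) * φ z)

/-! ### Auxiliary lemmas -/

lemma coulomb_ne_top' {d m : ℕ} {y : Fin m → Ed d} (hy : ∀ i j : Fin m, i < j → y i ≠ y j) :
    coulomb d m y ≠ ⊤ := by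
  rw [coulomb, Ne, ENNReal.sum_eq_top]
  rintro ⟨i, -, hi⟩
  rw [ENNReal.sum_eq_top] at hi
  obtain ⟨j, -, hj⟩ := hi
  split at hj
  · rw [ENNReal.inv_eq_top, edist_eq_zero] at hj
    exact hy i j (by assumption) hj
  · exact ENNReal.zero_ne_top hj

lemma coulomb_toReal' {d m : ℕ} {y : Fin m → Ed d} (hy : ∀ i j : Fin m, i < j → y i ≠ y j) :
    (coulomb d m y).toReal
      = ∑ i : Fin m, ∑ j : Fin m, if i < j then (dist (y i) (y j))⁻¹ else 0 := by
  rw [coulomb, ENNReal.toReal_sum]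
  · refine Finset.sum_congr rfl fun i _ => ?_
    rw [ENNReal.toReal_sum]
    · refine Finset.sum_congr rfl fun j _ => ?_
      split
      · rw [ENNReal.toReal_inv, dist_edist]
      · simp
    · intro j _
      split
      · rw [Ne, ENNReal.inv_eq_top, edist_eq_zero]
        exact hy i j (by assumption)
      · exact ENNReal.zero_ne_top
  · intro i _
    rw [Ne, ENNReal.sum_eq_top]
    rintro ⟨j, -, hj⟩
    split at hj
    · rw [ENNReal.inv_eq_top, edist_eq_zero] at hj
      exact hy i j (by assumption) hj
    · exact ENNReal.zero_ne_top hj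

lemma headCost_ne_top' {d m : ℕ} {x : Ed d} {y : Fin m → Ed d}
    (hx : ∀ i, x ≠ y i) (hB : coulomb d m y ≠ ⊤) : headCost d m x y ≠ ⊤ := by
  rw [headCost, Ne, ENNReal.add_eq_top]
  push_neg
  refine ⟨?_, hB⟩
  rw [Ne, ENNReal.sum_eq_top]
  rintro ⟨i, -, hi⟩
  rw [ENNReal.inv_eq_top, edist_eq_zero] at hi
  exact hx i hi

lemma headCost_split' {d m : ℕ} {x : Ed d} {y : Fin m → Ed d} (h : headCost d m x y ≠ ⊤) :
    (∀ i, x ≠ y i) ∧ coulomb d m y ≠ ⊤ ∧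
    (headCost d m x y).toReal = (∑ i, (dist x (y i))⁻¹) + (coulomb d m y).toReal := by
  rw [headCost, Ne, ENNReal.add_eq_top] at h
  push_neg at h
  obtain ⟨hA, hB⟩ := h
  have hx : ∀ i, x ≠ y i := by
    intro i hxy
    rw [Ne, ENNReal.sum_eq_top] at hA
    exact hA ⟨i, Finset.mem_univ i, by rw [ENNReal.inv_eq_top, edist_eq_zero]; exact hxy⟩
  refine ⟨hx, hB, ?_⟩
  rw [headCost, ENNReal.toReal_add hA hB, ENNReal.toReal_sum]
  · congr 1
    refine Finset.sum_congr rfl fun i _ => ?_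
    rw [ENNReal.toReal_inv, dist_edist]
  · intro i _
    rw [Ne, ENNReal.inv_eq_top, edist_eq_zero]
    exact hx i

/-- A configuration of `m` points on a ray from `x`, all at mutual distance at least `t`
and at norm at least `t - ‖x‖`. -/
lemma config_props' (d m : ℕ) (hd : 1 ≤ d) (x : Ed d) (t : ℝ) (ht : 0 < t) :
    ∃ y : Fin m → Ed d, (∀ i, x ≠ y i) ∧ (∀ i j : Fin m, i < j → y i ≠ y j) ∧
      (∀ i, (dist x (y i))⁻¹ ≤ t⁻¹) ∧
      (∀ i j : Fin m, i < j → (dist (y i) (y j))⁻¹ ≤ t⁻¹) ∧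
      (∀ i, t - ‖x‖ ≤ ‖y i‖) := by
  set e : Ed d := EuclideanSpace.single (⟨0, hd⟩ : Fin d) (1 : ℝ) with he
  have hne : ‖e‖ = 1 := by
    rw [he, EuclideanSpace.norm_single]; norm_num
  refine ⟨fun i => x + (t * ((i : ℝ) + 1)) • e, ?_, ?_, ?_, ?_, ?_⟩
  all_goals
    have hdxy : ∀ i : Fin m, dist x (x + (t * ((i : ℝ) + 1)) • e) = t * ((i : ℝ) + 1) := by
      intro i
      rw [dist_self_add_right, norm_smul, hne, Real.norm_eq_abs, mul_one, abs_of_pos]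
      positivity
  · intro i hxy
    dsimp only at hxy
    have := hdxy i
    rw [← hxy, dist_self] at this
    nlinarith [Nat.cast_nonneg (α := ℝ) (i : ℕ)]
  · intro i j hij hyy
    dsimp only at hyy
    have h1 : dist (x + (t * ((i : ℝ) + 1)) • e) (x + (t * ((j : ℝ) + 1)) • e)
        = |t * ((i : ℝ) + 1) - t * ((j : ℝ) + 1)| := by
      rw [dist_add_left, dist_eq_norm, ← sub_smul, norm_smul, hne, mul_one, Real.norm_eq_abs]
    rw [hyy, dist_self] at h1
    have hij' : (i : ℝ) < (j : ℝ) := by exact_mod_cast hij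
    have : t * ((i : ℝ) + 1) - t * ((j : ℝ) + 1) < 0 := by nlinarith
    rw [eq_comm, abs_eq_zero] at h1
    linarith [h1 ▸ this]
  · intro i
    rw [hdxy i]
    apply inv_anti₀ ht
    nlinarith [Nat.cast_nonneg (α := ℝ) (i : ℕ)]
  · intro i j hij
    have h1 : dist (x + (t * ((i : ℝ) + 1)) • e) (x + (t * ((j : ℝ) + 1)) • e)
        = |t * ((i : ℝ) + 1) - t * ((j : ℝ) + 1)| := by
      rw [dist_add_left, dist_eq_norm, ← sub_smul, norm_smul, hne, mul_one, Real.norm_eq_abs]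
    rw [h1]
    apply inv_anti₀ ht
    have hij' : (i : ℝ) + 1 ≤ (j : ℝ) := by
      have : (i : ℕ) + 1 ≤ (j : ℕ) := hij
      exact_mod_cast this
    rw [abs_sub_comm, abs_of_nonneg (by nlinarith)]
    nlinarith
  · intro i
    have h2 : ‖(t * ((i : ℝ) + 1)) • e‖ ≤ ‖x + (t * ((i : ℝ) + 1)) • e‖ + ‖x‖ := by
      have := norm_add_le (x + (t * ((i : ℝ) + 1)) • e) (-x)
      simpa [add_assoc] using this
    have h3 : t ≤ ‖(t * ((i : ℝ) + 1)) • e‖ := by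
      rw [norm_smul, hne, mul_one, Real.norm_eq_abs, abs_of_pos (by positivity)]
      nlinarith [Nat.cast_nonneg (α := ℝ) (i : ℕ)]
    dsimp only
    linarith

lemma le_of_forall_pos_le_add' {a b : ℝ} (h : ∀ ε : ℝ, 0 < ε → a ≤ b + ε) : a ≤ b := by
  by_contra hc
  push_neg at hc
  linarith [h ((a - b) / 2) (by linarith)]

/-- **uniform Lipschitz regularization.** For every R > 0 there is a
constant γ_N(R) such that for every φ ∈ C₀ with φ ≤ R, the regularized function φ̂ is
Lipschitz with constant at most γ_N(R). -/
theorem hatphi_lipschitz (d N : ℕ) (hd : 1 ≤ d) (hN : 2 ≤ N) (R : ℝ) (hR : 0 < R) :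
    ∃ γ : ℝ≥0, ∀ φ : Ed d → ℝ, IsC0 d φ → (∀ x, φ x ≤ R) →
      LipschitzWith γ (hatphi d N φ) := by
  classical
  have hNpos : (0:ℝ) < N := by
    have : 0 < N := by omega
    exact_mod_cast this
  obtain ⟨mR, hmRdef⟩ : ∃ mR : ℝ, mR = ((N - 1 : ℕ) : ℝ) := ⟨_, rfl⟩
  have hm1 : (1:ℝ) ≤ mR := by
    rw [hmRdef]
    have : 1 ≤ N - 1 := by omega
    exact_mod_cast this
  have hmR0 : (0:ℝ) < mR := by linarith
  obtain ⟨κ, hκdef⟩ : ∃ κ : ℝ, κ = 1 + mR * R := ⟨_, rfl⟩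
  have hκ : 0 < κ := by rw [hκdef]; positivity
  obtain ⟨δ, hδdef⟩ : ∃ δ : ℝ, δ = (N:ℝ) / κ := ⟨_, rfl⟩
  have hδ : 0 < δ := by rw [hδdef]; positivity
  obtain ⟨γ₀, hγdef⟩ : ∃ g : ℝ, g = 2 * (N:ℝ) * mR / δ ^ 2 + 2 * (mR * R) / δ := ⟨_, rfl⟩
  have hγ₀ : 0 ≤ γ₀ := by rw [hγdef]; positivity
  refine ⟨⟨γ₀, hγ₀⟩, ?_⟩
  intro φ hφ hφR
  set S : Ed d → Set ℝ := fun x =>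
    { r : ℝ | ∃ y : Fin (N - 1) → Ed d, headCost d (N - 1) x y ≠ ⊤ ∧
        r = (N : ℝ) * (headCost d (N - 1) x y).toReal - ∑ i, φ (y i) } with hSdef
  -- sum of φ over any configuration is at most mR * R
  have hsumR : ∀ y : Fin (N - 1) → Ed d, ∑ i, φ (y i) ≤ mR * R := by
    intro y
    calc ∑ i, φ (y i) ≤ ∑ _i : Fin (N - 1), R := Finset.sum_le_sum fun i _ => hφR (y i)
    _ = mR * R := by
        rw [Finset.sum_const, Finset.card_univ, Fintype.card_fin, nsmul_eq_mul, hmRdef]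
  -- lower bound for elements
  have hbdd : ∀ x, BddBelow (S x) := by
    intro x
    refine ⟨-(mR * R), fun r hr => ?_⟩
    obtain ⟨y, hH, hre⟩ := hr
    have h1 := ENNReal.toReal_nonneg (a := headCost d (N - 1) x y)
    have h2 := hsumR y
    rw [hre]
    nlinarith
  -- nonemptiness
  have hne : ∀ x, (S x).Nonempty := by
    intro x
    obtain ⟨y, hxy, hyy, -, -, -⟩ := config_props' d (N - 1) hd x 1 one_pos
    exact ⟨_, y, headCost_ne_top' hxy (coulomb_ne_top' hyy), rfl⟩
  -- the infimum is nonpositive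
  have hup : ∀ x, sInf (S x) ≤ 0 := by
    intro x
    refine le_of_forall_pos_le_add' fun ε hε => ?_
    rw [zero_add]
    -- pick a compact set outside which |φ| is small
    have hball : φ ⁻¹' (Metric.ball 0 (ε / (2 * (mR + 1)))) ∈ cocompact (Ed d) :=
      hφ.2 (Metric.ball_mem_nhds 0 (by positivity))
    rw [mem_cocompact] at hball
    obtain ⟨K, hK, hKsub⟩ := hball
    obtain ⟨M, hM⟩ := hK.isBounded.subset_closedBall 0
    obtain ⟨A, hAdef⟩ : ∃ A : ℝ, A = 2 * (N:ℝ) * (mR + mR ^ 2) / ε := ⟨_, rfl⟩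
    have hA0 : 0 ≤ A := by rw [hAdef]; positivity
    obtain ⟨t, htdef⟩ : ∃ t : ℝ, t = max A (M + ‖x‖) + 1 := ⟨_, rfl⟩
    have htA : A ≤ t := by
      have := le_max_left A (M + ‖x‖)
      rw [htdef]
      linarith
    have htM : M + ‖x‖ + 1 ≤ t := by
      have := le_max_right A (M + ‖x‖)
      rw [htdef]
      linarith
    have ht : 0 < t := by
      have := le_max_left A (M + ‖x‖)
      rw [htdef]
      linarith
    obtain ⟨y, hxy, hyy, hinv1, hinv2, hnorm⟩ := config_props' d (N - 1) hd x t ht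
    have hB := coulomb_ne_top' hyy
    have hH := headCost_ne_top' hxy hB
    have hrS : (N : ℝ) * (headCost d (N - 1) x y).toReal - ∑ i, φ (y i) ∈ S x :=
      ⟨y, hH, rfl⟩
    refine le_trans (csInf_le (hbdd x) hrS) ?_
    -- bound the cost term
    have hT := (headCost_split' hH).2.2
    have hsum1 : ∑ i, (dist x (y i))⁻¹ ≤ mR * t⁻¹ := by
      calc ∑ i, (dist x (y i))⁻¹ ≤ ∑ _i : Fin (N - 1), t⁻¹ :=
            Finset.sum_le_sum fun i _ => hinv1 i
      _ = mR * t⁻¹ := by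
          rw [Finset.sum_const, Finset.card_univ, Fintype.card_fin, nsmul_eq_mul, hmRdef]
    have hsum2 : (coulomb d (N - 1) y).toReal ≤ mR ^ 2 * t⁻¹ := by
      rw [coulomb_toReal' hyy]
      have hinner : ∀ i : Fin (N - 1),
          (∑ j : Fin (N - 1), if i < j then (dist (y i) (y j))⁻¹ else 0) ≤ mR * t⁻¹ := by
        intro i
        calc (∑ j : Fin (N - 1), if i < j then (dist (y i) (y j))⁻¹ else 0)
            ≤ ∑ _j : Fin (N - 1), t⁻¹ := by
              refine Finset.sum_le_sum fun j _ => ?_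
              split
              · exact hinv2 i j (by assumption)
              · positivity
        _ = mR * t⁻¹ := by
            rw [Finset.sum_const, Finset.card_univ, Fintype.card_fin, nsmul_eq_mul, hmRdef]
      calc (∑ i : Fin (N - 1), ∑ j : Fin (N - 1), if i < j then (dist (y i) (y j))⁻¹ else 0)
          ≤ ∑ _i : Fin (N - 1), mR * t⁻¹ := Finset.sum_le_sum fun i _ => hinner i
      _ = mR * (mR * t⁻¹) := by
          rw [Finset.sum_const, Finset.card_univ, Fintype.card_fin, nsmul_eq_mul, hmRdef]
      _ = mR ^ 2 * t⁻¹ := by ring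
    have hcost : (N : ℝ) * (headCost d (N - 1) x y).toReal ≤ ε / 2 := by
      have h1 : (N : ℝ) * (headCost d (N - 1) x y).toReal
          ≤ (N:ℝ) * (mR + mR ^ 2) * t⁻¹ := by
        rw [hT]
        nlinarith
      refine le_trans h1 ?_
      rw [← div_eq_mul_inv, div_le_iff₀ ht]
      have hAe : A * ε = 2 * (N:ℝ) * (mR + mR ^ 2) := by
        rw [hAdef, div_mul_cancel₀]
        exact ne_of_gt hε
      nlinarith
    -- bound the potential term
    have hφsmall : ∀ i, -φ (y i) ≤ ε / (2 * (mR + 1)) := by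
      intro i
      have hyK : y i ∉ K := by
        intro hyK
        have := hM hyK
        rw [Metric.mem_closedBall, dist_zero_right] at this
        have := hnorm i
        linarith
      have := hKsub hyK
      rw [Set.mem_preimage, Metric.mem_ball, Real.dist_eq, sub_zero] at this
      have := abs_lt.1 this
      linarith [this.1]
    have hφsum : -∑ i, φ (y i) ≤ ε / 2 := by
      have h1 : -∑ i, φ (y i) = ∑ i, -φ (y i) := by rw [Finset.sum_neg_distrib]
      rw [h1]
      calc ∑ i, -φ (y i) ≤ ∑ _i : Fin (N - 1), ε / (2 * (mR + 1)) :=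
            Finset.sum_le_sum fun i _ => hφsmall i
      _ = mR * (ε / (2 * (mR + 1))) := by
          rw [Finset.sum_const, Finset.card_univ, Fintype.card_fin, nsmul_eq_mul, hmRdef]
      _ ≤ ε / 2 := by
          rw [mul_comm, div_mul_eq_mul_div,
            div_le_div_iff₀ (by positivity) (by norm_num : (0:ℝ) < 2)]
          nlinarith
    linarith
  -- the infimum is bounded below
  have hlb : ∀ x, -(mR * R) ≤ sInf (S x) := by
    intro x
    refine le_csInf (hne x) fun r hr => ?_
    obtain ⟨y, hH, hre⟩ := hr
    have h1 := ENNReal.toReal_nonneg (a := headCost d (N - 1) x y)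
    have h2 := hsumR y
    rw [hre]
    nlinarith
  -- the key one-sided Lipschitz estimate
  have key : ∀ x x' : Ed d, sInf (S x') ≤ sInf (S x) + γ₀ * dist x x' := by
    intro x x'
    by_cases hcase : dist x x' ≤ δ / 2
    · -- near case
      refine le_of_forall_pos_le_add' fun ε hε => ?_
      obtain ⟨ε₁, hε₁def⟩ : ∃ e : ℝ, e = min ε 1 := ⟨_, rfl⟩
      have hε₁ : 0 < ε₁ := by rw [hε₁def]; exact lt_min hε one_pos
      have hε₁le : ε₁ ≤ ε := by rw [hε₁def]; exact min_le_left ε 1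
      have hε₁1 : ε₁ ≤ 1 := by rw [hε₁def]; exact min_le_right ε 1
      obtain ⟨r, hrS, hrlt⟩ := Real.lt_sInf_add_pos (hne x) hε₁
      obtain ⟨y, hH, hre⟩ := hrS
      obtain ⟨hxy, hB, hT⟩ := headCost_split' hH
      have hr1 : r < 1 := by
        have := hup x
        linarith
      have hsum := hsumR y
      -- separation of the configuration from x
      have hsep : ∀ i, δ ≤ dist x (y i) := by
        intro i
        have hpos : 0 < dist x (y i) := dist_pos.2 (hxy i)
        have hterm : (dist x (y i))⁻¹ ≤ ∑ j, (dist x (y j))⁻¹ :=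
          Finset.single_le_sum (f := fun j => (dist x (y j))⁻¹)
            (fun j _ => by positivity) (Finset.mem_univ i)
        have h5 : (N:ℝ) * (dist x (y i))⁻¹ ≤ r + mR * R := by
          have hc0 := ENNReal.toReal_nonneg (a := coulomb d (N - 1) y)
          have h6 : (N:ℝ) * (dist x (y i))⁻¹ ≤ (N:ℝ) * (headCost d (N - 1) x y).toReal := by
            rw [hT]
            nlinarith
          rw [hre]
          linarith
        have h6 : (N:ℝ) * (dist x (y i))⁻¹ < κ := by
          rw [hκdef]
          linarith
        have h7 := mul_lt_mul_of_pos_right h6 hpos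
        rw [mul_assoc, inv_mul_cancel₀ (ne_of_gt hpos), mul_one] at h7
        rw [hδdef, div_le_iff₀ hκ]
        nlinarith
      have hsep' : ∀ i, δ / 2 ≤ dist x' (y i) := by
        intro i
        have h1 := dist_triangle x x' (y i)
        have := hsep i
        linarith
      have hx'y : ∀ i, x' ≠ y i := by
        intro i h
        have := hsep' i
        rw [h, dist_self] at this
        linarith
      have hH' : headCost d (N - 1) x' y ≠ ⊤ := headCost_ne_top' hx'y hB
      obtain ⟨-, -, hT'⟩ := headCost_split' hH'
      have h8 : sInf (S x') ≤ (N:ℝ) * (headCost d (N - 1) x' y).toReal - ∑ i, φ (y i) :=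
        csInf_le (hbdd x') ⟨y, hH', rfl⟩
      -- estimate the difference of the two costs
      have hdiff : (headCost d (N - 1) x' y).toReal - (headCost d (N - 1) x y).toReal
          ≤ mR * (dist x x' * (2 / δ ^ 2)) := by
        rw [hT', hT]
        have hterm : ∀ i : Fin (N - 1),
            (dist x' (y i))⁻¹ - (dist x (y i))⁻¹ ≤ dist x x' * (2 / δ ^ 2) := by
          intro i
          have ha : δ / 2 ≤ dist x' (y i) := hsep' i
          have hb : δ ≤ dist x (y i) := hsep i
          have ha0 : 0 < dist x' (y i) := by linarith
          have hb0 : 0 < dist x (y i) := by linarith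
          have htri : dist x (y i) ≤ dist x x' + dist x' (y i) := dist_triangle x x' (y i)
          have hab : (dist x' (y i))⁻¹ - (dist x (y i))⁻¹
              = (dist x (y i) - dist x' (y i)) / (dist x' (y i) * dist x (y i)) := by
            field_simp
          rcases le_total (dist x (y i)) (dist x' (y i)) with hba | hba
          · have h1 : (dist x' (y i))⁻¹ ≤ (dist x (y i))⁻¹ := inv_anti₀ hb0 hba
            have h2 : 0 ≤ dist x x' * (2 / δ ^ 2) := by positivity
            linarith
          · rw [hab]
            have h1 : (dist x (y i) - dist x' (y i)) / (dist x' (y i) * dist x (y i))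
                ≤ (dist x (y i) - dist x' (y i)) / (δ / 2 * δ) := by
              apply div_le_div_of_nonneg_left (by linarith) (by positivity)
              nlinarith
            have h2 : (dist x (y i) - dist x' (y i)) / (δ / 2 * δ)
                ≤ dist x x' / (δ / 2 * δ) := by
              apply div_le_div_of_nonneg_right ?_ (by positivity)
              linarith
            have h3 : dist x x' / (δ / 2 * δ) = dist x x' * (2 / δ ^ 2) := by
              rw [show δ / 2 * δ = δ ^ 2 / 2 by ring, div_div_eq_mul_div, mul_div_assoc]
            linarith
        have hsub : ((∑ i, (dist x' (y i))⁻¹) + (coulomb d (N - 1) y).toReal)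
            - ((∑ i, (dist x (y i))⁻¹) + (coulomb d (N - 1) y).toReal)
            = ∑ i, ((dist x' (y i))⁻¹ - (dist x (y i))⁻¹) := by
          rw [Finset.sum_sub_distrib]
          ring
        rw [hsub]
        calc ∑ i, ((dist x' (y i))⁻¹ - (dist x (y i))⁻¹)
            ≤ ∑ _i : Fin (N - 1), dist x x' * (2 / δ ^ 2) :=
              Finset.sum_le_sum fun i _ => hterm i
        _ = mR * (dist x x' * (2 / δ ^ 2)) := by
            rw [Finset.sum_const, Finset.card_univ, Fintype.card_fin, nsmul_eq_mul, hmRdef]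
      have h9 : (N:ℝ) * (headCost d (N - 1) x' y).toReal
          ≤ (N:ℝ) * (headCost d (N - 1) x y).toReal
            + (N:ℝ) * (mR * (dist x x' * (2 / δ ^ 2))) := by
        nlinarith
      have h10 : (N:ℝ) * (mR * (dist x x' * (2 / δ ^ 2))) ≤ γ₀ * dist x x' := by
        have hg1 : (N:ℝ) * (mR * (dist x x' * (2 / δ ^ 2)))
            = (2 * (N:ℝ) * mR / δ ^ 2) * dist x x' := by
          field_simp
        rw [hg1, hγdef]
        have h11 : 0 ≤ 2 * (mR * R) / δ := by positivity
        nlinarith [(dist_nonneg : (0:ℝ) ≤ dist x x')]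
      have h12 : r = (N:ℝ) * (headCost d (N - 1) x y).toReal - ∑ i, φ (y i) := hre
      linarith
    · -- far case
      push_neg at hcase
      have h1 : sInf (S x') ≤ 0 := hup x'
      have h2 : -(mR * R) ≤ sInf (S x) := hlb x
      have h3 : mR * R ≤ γ₀ * dist x x' := by
        have h4 : 2 * (mR * R) / δ * dist x x' ≤ γ₀ * dist x x' := by
          have h5 : 0 ≤ 2 * (N:ℝ) * mR / δ ^ 2 := by positivity
          have : (0:ℝ) ≤ dist x x' := dist_nonneg
          rw [hγdef]
          nlinarith
        have h6 : mR * R ≤ 2 * (mR * R) / δ * dist x x' := by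
          rw [div_mul_eq_mul_div, le_div_iff₀ hδ]
          nlinarith [mul_lt_mul_of_pos_left hcase (mul_pos hmR0 hR), mul_pos hmR0 hR]
        linarith
      linarith
  -- conclude
  obtain ⟨C, hCdef⟩ : ∃ C : ℝ,
      C = (N : ℝ) * Mfun d (N - 1) (fun z => (((N : ℝ) - 1) / N) * φ z) := ⟨_, rfl⟩
  have hhx : ∀ z, hatphi d N φ z = sInf (S z) + C := by
    intro z
    rw [hCdef]
    rfl
  refine LipschitzWith.of_dist_le_mul fun x x' => ?_
  have h1 := key x x'
  have h2 := key x' x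
  rw [dist_comm x' x] at h2
  rw [Real.dist_eq, hhx x, hhx x']
  change _ ≤ γ₀ * dist x x'
  rw [abs_sub_le_iff]
  constructor <;> linarith

end
end
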